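/- arXiv:2004.04535 — 8 statements merged into one kernel-verified Lean document; each statement's English description precedes it below -/
import Mathlib

section
/- If a and d are both odd with d ≥ 3 and c = 2^a, then there is no integer k ≥ 4 with k(k-1) = 2(c^d - 1) = 2(2^(ad) - 1). -/
/-- If a and d are both odd, d ≥ 3, then there is no integer k ≥ 4 with
k(k-1) = 2(2^(ad) - 1). -/
theorem stmt_2 (a d : ℕ) (ha : Odd a) (hd : Odd d) (hd3 : 3 ≤ d) :
    ¬ ∃ k : ℕ, 4 ≤ k ∧ k * (k - 1) = 2 * (2 ^ (a * d) - 1) := by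
  rintro ⟨k, hk4, hk⟩
  have hn : Odd (a * d) := ha.mul hd
  obtain ⟨t, ht⟩ := hn
  obtain ⟨m, hm⟩ : ∃ m, a * d + 1 = m + m := ⟨t + 1, by omega⟩
  -- work in ℤ
  have h1 : (1 : ℕ) ≤ 2 ^ (a * d) := Nat.one_le_two_pow
  have hZ : (k : ℤ) * (k - 1) = 2 * (2 ^ (a * d) - 1) := by
    have := hk
    zify [h1, show 1 ≤ k by omega] at this
    linarith
  set s : ℤ := 2 ^ m with hs
  have hpow : (2 : ℤ) ^ (a * d + 1) = s * s := by
    rw [hs, ← pow_add, ← hm]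
  have heq : (k : ℤ) * k - k + 2 = s * s := by
    rw [← hpow, pow_succ]
    linarith [hZ]
  have hk4' : (4 : ℤ) ≤ (k : ℤ) := by exact_mod_cast hk4
  have hs0 : (0 : ℤ) ≤ s := by positivity
  have hlt : s * s < (k : ℤ) * k := by linarith
  have hsk : s < (k : ℤ) := by nlinarith
  have hsk' : s ≤ (k : ℤ) - 1 := by omega
  nlinarith [mul_self_le_mul_self hs0 hsk']
end

section
/- Every automorphism of a symmetric design fixes an equal number of points and blocks. -/
/-!
Index the incidence matrix `N` by blocks and points. Double counting shows that every point lies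
in `k` blocks, so `Nᵀ N = (k - λ) I + λ J`, which is invertible because `k > λ`; as `N` is square,
it is invertible. An automorphism `σ` permutes the blocks, and the permutation matrices of the two
actions satisfy `Q N = N P`, so `Q` and `P` are conjugate and have the same trace. The trace of a
permutation matrix is its number of fixed points.
-/

open Finset Matrix

namespace Matrix

variable {m n : Type*} [Fintype m] [Fintype n]

theorem trace_eq_trace_of_mul_eq_mul [DecidableEq m] [DecidableEq n] {R : Type*} [Field R]
    {A : Matrix m m R} {B : Matrix n n R} {N : Matrix m n R} {L : Matrix n m R}
    (hcard : Fintype.card m = Fintype.card n) (hLN : L * N = 1) (h : A * N = N * B) :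
    A.trace = B.trace :=
  calc A.trace = (A * N * L).trace := by
        rw [Matrix.mul_assoc, (mul_eq_one_comm_of_card_eq _ _ _ hcard.symm).1 hLN, Matrix.mul_one]
    _ = (L * (N * B)).trace := by rw [h, trace_mul_comm]
    _ = B.trace := by rw [← Matrix.mul_assoc, hLN, Matrix.one_mul]

theorem trace_permMatrix [DecidableEq n] {R : Type*} [AddCommMonoidWithOne R]
    (σ : Equiv.Perm n) : (σ.permMatrix R).trace = #{i | σ i = i} := by
  simp [trace, Equiv.toPEquiv_apply]

theorem isUnit_smul_one_add_smul_ones [DecidableEq n] {K : Type*} [Field K] {a b : K}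
    (ha : a ≠ 0) (hab : a + Fintype.card n * b ≠ 0) :
    IsUnit (a • (1 : Matrix n n K) + b • of fun _ _ => 1) := by
  set J : Matrix n n K := of fun _ _ => 1
  set c := b / (a * (a + Fintype.card n * b))
  have hJJ : J * J = (Fintype.card n : K) • J := by ext; simp [J, Matrix.mul_apply]
  have hc : a⁻¹ * b - c * (a + Fintype.card n * b) = 0 := by
    rw [div_mul_eq_mul_div, mul_div_mul_right _ _ hab, inv_mul_eq_div, sub_self]
  rw [isUnit_iff_isUnit_det]
  refine isUnit_det_of_left_inverse (B := a⁻¹ • 1 - c • J) ?_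
  calc (a⁻¹ • 1 - c • J) * (a • 1 + b • J)
      = (a⁻¹ * a) • 1 + (a⁻¹ * b - c * (a + Fintype.card n * b)) • J := by
        simp only [mul_add, sub_mul, smul_mul_smul, Matrix.one_mul, Matrix.mul_one, hJJ, smul_smul]
        module
    _ = 1 := by rw [inv_mul_cancel₀ ha, hc, one_smul, zero_smul, add_zero]

end Matrix

section Design

variable {P : Type*} [DecidableEq P] {𝓑 : Finset (Finset P)} {k lam : ℕ}

def incidenceMatrix (R : Type*) [Zero R] [One R] (𝓑 : Finset (Finset P)) : Matrix 𝓑 P R :=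
  of fun b p => if p ∈ (b : Finset P) then 1 else 0

theorem transpose_incidenceMatrix_mul {R : Type*} [Semiring R] :
    (incidenceMatrix R 𝓑)ᵀ * incidenceMatrix R 𝓑 =
      of fun p q => (#{b ∈ 𝓑 | p ∈ b ∧ q ∈ b} : R) := by
  ext p q
  rw [mul_apply, of_apply, ← sum_boole, ← sum_coe_sort 𝓑]
  simp only [incidenceMatrix, transpose_apply, of_apply, boole_mul, ite_and]

variable (σ : Equiv.Perm P) (hσ : ∀ b ∈ 𝓑, b.image σ ∈ 𝓑)

noncomputable def blockPerm : Equiv.Perm 𝓑 :=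
  Equiv.ofBijective (fun b => ⟨(b : Finset P).image σ, hσ b b.2⟩) <|
    Finite.injective_iff_bijective.mp fun _ _ h =>
      Subtype.ext <| image_injective σ.injective (congrArg Subtype.val h)

theorem card_fixed_blockPerm : #{b | blockPerm σ hσ b = b} = #{b ∈ 𝓑 | b.image σ = b} := by
  rw [card_filter, card_filter, ← sum_coe_sort 𝓑]
  simp [blockPerm, Subtype.ext_iff]

variable [Fintype P]

theorem permMatrix_blockPerm_mul_incidenceMatrix (R : Type*) [Semiring R] :
    (blockPerm σ hσ).permMatrix R * incidenceMatrix R 𝓑 = incidenceMatrix R 𝓑 * σ.permMatrix R := by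
  rw [Equiv.Perm.permMatrix, Equiv.Perm.permMatrix, PEquiv.toMatrix_toPEquiv_mul,
    PEquiv.mul_toMatrix_toPEquiv]
  ext b p
  simp [incidenceMatrix, blockPerm, ← Equiv.eq_symm_apply]

theorem card_filter_mem_mul_pred (hk : ∀ b ∈ 𝓑, #b = k)
    (hpair : ∀ p q : P, p ≠ q → #{b ∈ 𝓑 | p ∈ b ∧ q ∈ b} = lam) (p : P) :
    #{b ∈ 𝓑 | p ∈ b} * (k - 1) = (Fintype.card P - 1) * lam := by
  have hcount := card_mul_eq_card_mul (s := {b ∈ 𝓑 | p ∈ b}) (t := univ.erase p)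
    (fun b q => q ∈ b) (m := k - 1) (n := lam) ?_ ?_
  · rwa [card_erase_of_mem (mem_univ p), card_univ] at hcount
  · intro b hb
    rw [mem_filter] at hb
    rw [bipartiteAbove, ← hk b hb.1, ← card_erase_of_mem hb.2]
    congr 1
    ext q
    simp [and_comm]
  · intro q hq
    rw [bipartiteBelow, filter_filter]
    exact hpair p q (mem_erase.1 hq).1.symm

theorem card_filter_mem_eq (hk : ∀ b ∈ 𝓑, #b = k)
    (hpair : ∀ p q : P, p ≠ q → #{b ∈ 𝓑 | p ∈ b ∧ q ∈ b} = lam) (hk₁ : 1 < k)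
    (h𝓑 : #𝓑 = Fintype.card P) (p : P) :
    #{b ∈ 𝓑 | p ∈ b} = k := by
  have hconst (q : P) : #{b ∈ 𝓑 | q ∈ b} = #{b ∈ 𝓑 | p ∈ b} :=
    Nat.eq_of_mul_eq_mul_right (by omega : 0 < k - 1) <|
      (card_filter_mem_mul_pred hk hpair q).trans (card_filter_mem_mul_pred hk hpair p).symm
  have hsum := sum_card hconst
  rw [sum_const_nat hk, h𝓑] at hsum
  exact (Nat.eq_of_mul_eq_mul_left (Fintype.card_pos_iff.2 ⟨p⟩) hsum).symm

theorem exists_mul_incidenceMatrix_eq_one {R : Type*} [Field R] [CharZero R]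
    (hr : ∀ p : P, #{b ∈ 𝓑 | p ∈ b} = k)
    (hpair : ∀ p q : P, p ≠ q → #{b ∈ 𝓑 | p ∈ b ∧ q ∈ b} = lam) (hlamk : lam < k) :
    ∃ L : Matrix P 𝓑 R, L * incidenceMatrix R 𝓑 = 1 := by
  have hNN : (incidenceMatrix R 𝓑)ᵀ * incidenceMatrix R 𝓑 =
      ((k : R) - lam) • 1 + (lam : R) • of fun _ _ => 1 := by
    rw [transpose_incidenceMatrix_mul]
    ext p q
    rcases eq_or_ne p q with rfl | hpq
    · simp [hr]
    · simp [hpair p q hpq, hpq]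
  have ha : (k : R) - lam ≠ 0 := sub_ne_zero.2 (by exact_mod_cast hlamk.ne')
  have hab : (k : R) - lam + Fintype.card P * lam ≠ 0 := by
    have : ((k - lam + Fintype.card P * lam : ℕ) : R) ≠ 0 := Nat.cast_ne_zero.2 (by omega)
    push_cast [Nat.cast_sub hlamk.le] at this
    exact this
  obtain ⟨X, hX⟩ := (isUnit_smul_one_add_smul_ones ha hab).exists_left_inv
  exact ⟨X * (incidenceMatrix R 𝓑)ᵀ, by rw [Matrix.mul_assoc, hNN, hX]⟩

end Design

theorem stmt_6_general {P : Type*} [Fintype P] [DecidableEq P]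
    (v k lam : ℕ) (hv : Fintype.card P = v)
    (𝓑 : Finset (Finset P)) (hcard : 𝓑.card = v)
    (hk : ∀ b ∈ 𝓑, b.card = k)
    (hpair : ∀ p q : P, p ≠ q →
      (𝓑.filter (fun b => p ∈ b ∧ q ∈ b)).card = lam)
    (hlam : 0 < lam) (hlamk : lam < k)
    (σ : Equiv.Perm P) (hσ : ∀ b ∈ 𝓑, b.image σ ∈ 𝓑) :
    (Finset.univ.filter (fun p => σ p = p)).card =
      (𝓑.filter (fun b => b.image σ = b)).card := by
  have hr := card_filter_mem_eq hk hpair (by omega) (hcard.trans hv.symm)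
  obtain ⟨L, hL⟩ := exists_mul_incidenceMatrix_eq_one (R := ℚ) hr hpair hlamk
  have htrace := trace_eq_trace_of_mul_eq_mul (by simp [hcard, hv]) hL
    (permMatrix_blockPerm_mul_incidenceMatrix σ hσ ℚ)
  rw [trace_permMatrix, trace_permMatrix, card_fixed_blockPerm] at htrace
  exact_mod_cast htrace.symm

/-- Every automorphism of a (nontrivial) symmetric design fixes an equal
number of points and blocks. -/
theorem stmt_6 {P : Type*} [Fintype P] [DecidableEq P]
    (v k lam : ℕ) (hv : Fintype.card P = v)
    (𝓑 : Finset (Finset P)) (hcard : 𝓑.card = v)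
    (hk : ∀ b ∈ 𝓑, b.card = k)
    (hpair : ∀ p q : P, p ≠ q →
      (𝓑.filter (fun b => p ∈ b ∧ q ∈ b)).card = lam)
    (hlam : 0 < lam) (hlamk : lam < k) (hkv : k < v)
    (σ : Equiv.Perm P) (hσ : ∀ b ∈ 𝓑, b.image σ ∈ 𝓑) :
    (Finset.univ.filter (fun p => σ p = p)).card =
      (𝓑.filter (fun b => b.image σ = b)).card :=
  stmt_6_general v k lam hv 𝓑 hcard hk hpair hlam hlamk σ hσ
end

section
/- Let D be a biplane with parameters (v,k,2), k ≥ 4, and let x be an automorphism of odd order fixing a block B, with no 2-cycles on points. If s denotes the number of fixed points of x in B, then the number f of fixed blocks of x equals s(s-1)/2 + 1. -/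
open Finset

private lemma cast_mul_pred (n : ℕ) : ((n * (n - 1) : ℕ) : ℤ) = n * n - n := by
  cases n with
  | zero => simp
  | succ m => push_cast [Nat.succ_sub_one]; ring

private lemma nat_mul_pred (n : ℕ) : n * (n - 1) = n * n - n := by
  cases n with
  | zero => simp
  | succ m => rw [Nat.succ_sub_one, Nat.mul_succ, Nat.add_sub_cancel]


/-- Let D be a biplane with parameters (v,k,2), k ≥ 4, and x an automorphism
of odd order with no 2-cycles on points, fixing a block B. If s is the number
of fixed points of x in B, then the number of fixed blocks of x equals
s(s-1)/2 + 1. -/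
theorem stmt_7 {P : Type*} [Fintype P] [DecidableEq P]
    (v k : ℕ) (hv : Fintype.card P = v) (hk4 : 4 ≤ k)
    (𝓑 : Finset (Finset P)) (hcard : 𝓑.card = v)
    (hk : ∀ b ∈ 𝓑, b.card = k)
    (hpair : ∀ p q : P, p ≠ q →
      (𝓑.filter (fun b => p ∈ b ∧ q ∈ b)).card = 2)
    (σ : Equiv.Perm P) (hσ : ∀ b ∈ 𝓑, b.image σ ∈ 𝓑)
    (hodd : Odd (orderOf σ))
    (hno2 : ∀ p : P, σ (σ p) = p → σ p = p)
    (B : Finset P) (hB : B ∈ 𝓑) (hBfix : B.image σ = B) :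
    (𝓑.filter (fun b => b.image σ = b)).card =
      (B.filter (fun p => σ p = p)).card *
        ((B.filter (fun p => σ p = p)).card - 1) / 2 + 1 := by
  classical
  have hBk : B.card = k := hk B hB
  have hv1 : 1 ≤ v := by
    have h := Finset.card_pos.mpr ⟨B, hB⟩
    omega
  -- step 1: r p * (k-1) = (v-1) * 2
  have hpt : ∀ p : P, (𝓑.filter (fun b => p ∈ b)).card * (k - 1) = (v - 1) * 2 := by
    intro p
    have e1 : ∑ q ∈ univ.erase p, (𝓑.filter (fun b => p ∈ b ∧ q ∈ b)).card
        = (𝓑.filter (fun b => p ∈ b)).card * (k - 1) := by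
      calc ∑ q ∈ univ.erase p, (𝓑.filter (fun b => p ∈ b ∧ q ∈ b)).card
          = ∑ q ∈ univ.erase p, ∑ b ∈ 𝓑, if p ∈ b ∧ q ∈ b then 1 else 0 := by
            exact Finset.sum_congr rfl fun q _ => Finset.card_filter _ _
        _ = ∑ b ∈ 𝓑, ∑ q ∈ univ.erase p, if p ∈ b ∧ q ∈ b then 1 else 0 :=
            Finset.sum_comm
        _ = ∑ b ∈ 𝓑, if p ∈ b then k - 1 else 0 := by
            refine Finset.sum_congr rfl fun b hb => ?_
            by_cases hp : p ∈ b
            · rw [if_pos hp]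
              have h1 : ∑ q ∈ univ.erase p, (if p ∈ b ∧ q ∈ b then 1 else 0)
                  = ((univ.erase p).filter (fun q => p ∈ b ∧ q ∈ b)).card :=
                (Finset.card_filter _ _).symm
              rw [h1]
              have he : (univ.erase p).filter (fun q => p ∈ b ∧ q ∈ b) = b.erase p := by
                ext q
                simp [Finset.mem_erase, hp, and_comm]
              rw [he, Finset.card_erase_of_mem hp, hk b hb]
            · simp [hp]
        _ = (𝓑.filter (fun b => p ∈ b)).card * (k - 1) := by
            rw [← Finset.sum_filter, Finset.sum_const, smul_eq_mul]
    have e2 : ∑ q ∈ univ.erase p, (𝓑.filter (fun b => p ∈ b ∧ q ∈ b)).card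
        = (v - 1) * 2 := by
      rw [Finset.sum_congr rfl (fun q hq => hpair p q (Ne.symm (Finset.ne_of_mem_erase hq)))]
      rw [Finset.sum_const, Finset.card_erase_of_mem (Finset.mem_univ p), Finset.card_univ, hv]
      simp [mul_comm]
    omega
  -- step 2: sum of r p = v * k
  have hsum : ∑ p : P, (𝓑.filter (fun b => p ∈ b)).card = v * k := by
    calc ∑ p : P, (𝓑.filter (fun b => p ∈ b)).card
        = ∑ p : P, ∑ b ∈ 𝓑, if p ∈ b then 1 else 0 :=
          Finset.sum_congr rfl fun p _ => Finset.card_filter _ _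
      _ = ∑ b ∈ 𝓑, ∑ p : P, if p ∈ b then 1 else 0 := Finset.sum_comm
      _ = ∑ b ∈ 𝓑, b.card := by
          refine Finset.sum_congr rfl fun b hb => ?_
          rw [← Finset.card_filter]
          congr 1
          ext q
          simp
      _ = ∑ b ∈ 𝓑, k := Finset.sum_congr rfl fun b hb => hk b hb
      _ = v * k := by rw [Finset.sum_const, hcard, smul_eq_mul]
  have hkk : k * (k - 1) = (v - 1) * 2 := by
    have h1 : ∑ p : P, (𝓑.filter (fun b => p ∈ b)).card * (k - 1) = v * ((v - 1) * 2) := by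
      rw [Finset.sum_congr rfl (fun p _ => hpt p), Finset.sum_const, Finset.card_univ, hv]
      simp [mul_comm]
    rw [← Finset.sum_mul, hsum] at h1
    have := Nat.eq_of_mul_eq_mul_left hv1 (by linarith [h1] : v * (k * (k - 1)) = v * ((v - 1) * 2))
    exact this
  have hr : ∀ p : P, (𝓑.filter (fun b => p ∈ b)).card = k := by
    intro p
    have h1 := hpt p
    have h2 : (𝓑.filter (fun b => p ∈ b)).card * (k - 1) = k * (k - 1) := by omega
    exact Nat.eq_of_mul_eq_mul_right (by omega) h2
  -- intersection numbers: any block ≠ B meets B in exactly 2 points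
  have hint : ∀ C ∈ 𝓑.erase B, (B ∩ C).card = 2 := by
    have hi1 : ∑ C ∈ 𝓑.erase B, (B ∩ C).card = k * (k - 1) := by
      calc ∑ C ∈ 𝓑.erase B, (B ∩ C).card
          = ∑ C ∈ 𝓑.erase B, ∑ p ∈ B, (if p ∈ C then 1 else 0) := by
            refine Finset.sum_congr rfl fun C _ => ?_
            rw [← Finset.card_filter]
            congr 1
        _ = ∑ p ∈ B, ∑ C ∈ 𝓑.erase B, (if p ∈ C then 1 else 0) := Finset.sum_comm
        _ = ∑ p ∈ B, ((𝓑.erase B).filter (fun C => p ∈ C)).card :=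
            Finset.sum_congr rfl fun p _ => (Finset.card_filter _ _).symm
        _ = ∑ p ∈ B, (k - 1) := by
            refine Finset.sum_congr rfl fun p hp => ?_
            have he : (𝓑.erase B).filter (fun C => p ∈ C)
                = (𝓑.filter (fun C => p ∈ C)).erase B := by
              ext C
              simp only [Finset.mem_filter, Finset.mem_erase]
              tauto
            rw [he, Finset.card_erase_of_mem (Finset.mem_filter.mpr ⟨hB, hp⟩), hr p]
        _ = k * (k - 1) := by rw [Finset.sum_const, hBk, smul_eq_mul]
    have hi2 : ∑ C ∈ 𝓑.erase B, (B ∩ C).card * ((B ∩ C).card - 1) = k * (k - 1) := by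
      calc ∑ C ∈ 𝓑.erase B, (B ∩ C).card * ((B ∩ C).card - 1)
          = ∑ C ∈ 𝓑.erase B, (B ∩ C).offDiag.card := by
            refine Finset.sum_congr rfl fun C _ => ?_
            rw [Finset.offDiag_card, nat_mul_pred]
        _ = ∑ C ∈ 𝓑.erase B, ∑ pq ∈ B.offDiag, (if pq.1 ∈ C ∧ pq.2 ∈ C then 1 else 0) := by
            refine Finset.sum_congr rfl fun C _ => ?_
            rw [← Finset.card_filter]
            congr 1
            ext ⟨p, q⟩
            simp only [Finset.mem_offDiag, Finset.mem_filter, Finset.mem_inter]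
            tauto
        _ = ∑ pq ∈ B.offDiag, ∑ C ∈ 𝓑.erase B, (if pq.1 ∈ C ∧ pq.2 ∈ C then 1 else 0) :=
            Finset.sum_comm
        _ = ∑ pq ∈ B.offDiag, ((𝓑.erase B).filter (fun C => pq.1 ∈ C ∧ pq.2 ∈ C)).card :=
            Finset.sum_congr rfl fun pq _ => (Finset.card_filter _ _).symm
        _ = ∑ pq ∈ B.offDiag, 1 := by
            refine Finset.sum_congr rfl fun pq hpq => ?_
            rw [Finset.mem_offDiag] at hpq
            have he : (𝓑.erase B).filter (fun C => pq.1 ∈ C ∧ pq.2 ∈ C)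
                = (𝓑.filter (fun C => pq.1 ∈ C ∧ pq.2 ∈ C)).erase B := by
              ext C
              simp only [Finset.mem_filter, Finset.mem_erase]
              tauto
            rw [he, Finset.card_erase_of_mem
              (Finset.mem_filter.mpr ⟨hB, hpq.1, hpq.2.1⟩), hpair _ _ hpq.2.2]
        _ = k * (k - 1) := by
            rw [Finset.sum_const, smul_eq_mul, mul_one, Finset.offDiag_card, hBk, nat_mul_pred]
    have hcd : (𝓑.erase B).card = v - 1 := by
      rw [Finset.card_erase_of_mem hB, hcard]
    have hz : ∑ C ∈ 𝓑.erase B, (((B ∩ C).card : ℤ) - 2) ^ 2 = 0 := by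
      have h3 : ∀ C ∈ 𝓑.erase B, (((B ∩ C).card : ℤ) - 2) ^ 2
          = ((B ∩ C).card * ((B ∩ C).card - 1) : ℕ) - 3 * ((B ∩ C).card : ℤ) + 4 := by
        intro C _
        rw [cast_mul_pred]
        ring
      rw [Finset.sum_congr rfl h3, Finset.sum_add_distrib, Finset.sum_sub_distrib,
        ← Nat.cast_sum, ← Finset.mul_sum, ← Nat.cast_sum, hi1, hi2, Finset.sum_const, hcd, hkk]
      push_cast
      ring
    intro C hC
    have h0 := (Finset.sum_eq_zero_iff_of_nonneg (fun C _ => sq_nonneg _)).mp hz C hC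
    have h4 : ((B ∩ C).card : ℤ) = 2 := by
      have := pow_eq_zero_iff (n := 2) (by norm_num) |>.mp h0
      omega
    exact_mod_cast h4
  -- the bijective counting
  set Fix : Finset P := B.filter (fun p => σ p = p) with hFixdef
  set T : Finset (Finset P) := (𝓑.filter (fun b => b.image σ = b)).erase B with hTdef
  have himg_inj : Function.Injective (Finset.image σ : Finset P → Finset P) :=
    Finset.image_injective σ.injective
  -- each pair of distinct fixed points of B lies in exactly one fixed block ≠ B
  have hone : ∀ pq ∈ Fix.offDiag, (T.filter (fun C => pq.1 ∈ C ∧ pq.2 ∈ C)).card = 1 := by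
    rintro ⟨p, q⟩ hpq
    rw [Finset.mem_offDiag] at hpq
    obtain ⟨hp, hq, hne⟩ := hpq
    rw [hFixdef, Finset.mem_filter] at hp hq
    obtain ⟨hpB, hpfix⟩ := hp
    obtain ⟨hqB, hqfix⟩ := hq
    replace hpfix : σ p = p := hpfix
    replace hqfix : σ q = q := hqfix
    replace hpB : p ∈ B := hpB
    replace hqB : q ∈ B := hqB
    have hBmem : B ∈ 𝓑.filter (fun b => p ∈ b ∧ q ∈ b) :=
      Finset.mem_filter.mpr ⟨hB, hpB, hqB⟩
    have hE : ((𝓑.filter (fun b => p ∈ b ∧ q ∈ b)).erase B).card = 1 := by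
      rw [Finset.card_erase_of_mem hBmem, hpair p q hne]
    obtain ⟨C₀, hC₀⟩ := Finset.card_eq_one.mp hE
    have hC₀mem : C₀ ∈ (𝓑.filter (fun b => p ∈ b ∧ q ∈ b)).erase B := by
      rw [hC₀]; exact Finset.mem_singleton_self _
    rw [Finset.mem_erase, Finset.mem_filter] at hC₀mem
    obtain ⟨hC₀ne, hC₀𝓑, hpC₀, hqC₀⟩ := hC₀mem
    -- C₀ is fixed by σ
    have hC₀fix : C₀.image σ = C₀ := by
      have h1 : C₀.image σ ∈ 𝓑.filter (fun b => p ∈ b ∧ q ∈ b) := by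
        refine Finset.mem_filter.mpr ⟨hσ C₀ hC₀𝓑, ?_, ?_⟩
        · exact hpfix ▸ Finset.mem_image_of_mem σ hpC₀
        · exact hqfix ▸ Finset.mem_image_of_mem σ hqC₀
      have h2 : 𝓑.filter (fun b => p ∈ b ∧ q ∈ b)
          = insert B ((𝓑.filter (fun b => p ∈ b ∧ q ∈ b)).erase B) :=
        (Finset.insert_erase hBmem).symm
      rw [h2, hC₀, Finset.mem_insert, Finset.mem_singleton] at h1
      rcases h1 with h1 | h1
      · exact absurd (himg_inj (h1.trans hBfix.symm)) hC₀ne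
      · exact h1
    have heq : T.filter (fun C => p ∈ C ∧ q ∈ C) = {C₀} := by
      ext C
      simp only [Finset.mem_filter, Finset.mem_erase, Finset.mem_singleton, hTdef]
      constructor
      · rintro ⟨⟨hCne, hC𝓑, hCfix⟩, hpC, hqC⟩
        have : C ∈ (𝓑.filter (fun b => p ∈ b ∧ q ∈ b)).erase B :=
          Finset.mem_erase.mpr ⟨hCne, Finset.mem_filter.mpr ⟨hC𝓑, hpC, hqC⟩⟩
        rw [hC₀] at this
        exact Finset.mem_singleton.mp this
      · rintro rfl
        exact ⟨⟨hC₀ne, hC₀𝓑, hC₀fix⟩, hpC₀, hqC₀⟩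
    rw [heq, Finset.card_singleton]
  -- each fixed block ≠ B contains exactly 2 ordered pairs of distinct fixed points of B
  have htwo : ∀ C ∈ T, (Fix.offDiag.filter (fun pq => pq.1 ∈ C ∧ pq.2 ∈ C)).card = 2 := by
    intro C hC
    rw [hTdef, Finset.mem_erase, Finset.mem_filter] at hC
    obtain ⟨hCne, hC𝓑, hCfix⟩ := hC
    have hBC : (B ∩ C).card = 2 := hint C (Finset.mem_erase.mpr ⟨hCne, hC𝓑⟩)
    obtain ⟨a, b, hab, hset⟩ := Finset.card_eq_two.mp hBC
    have hainter : a ∈ B ∩ C := by rw [hset]; simp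
    have hbinter : b ∈ B ∩ C := by rw [hset]; simp
    have hinv : (B ∩ C).image σ = B ∩ C := by
      rw [Finset.image_inter _ _ σ.injective, hBfix, hCfix]
    have hsa : σ a ∈ B ∩ C := hinv ▸ Finset.mem_image_of_mem σ hainter
    have hsb : σ b ∈ B ∩ C := hinv ▸ Finset.mem_image_of_mem σ hbinter
    rw [hset, Finset.mem_insert, Finset.mem_singleton] at hsa hsb
    have hafix : σ a = a := by
      rcases hsa with h | h
      · exact h
      · rcases hsb with h' | h'
        · exact hno2 a (by rw [h, h'])
        · exact absurd (σ.injective (h.trans h'.symm)) hab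
    have hbfix : σ b = b := by
      rcases hsb with h' | h'
      · exact absurd (σ.injective (hafix.trans h'.symm)) hab
      · exact h'
    have heq : Fix.offDiag.filter (fun pq => pq.1 ∈ C ∧ pq.2 ∈ C)
        = {(a, b), (b, a)} := by
      ext ⟨p, q⟩
      simp only [Finset.mem_filter, Finset.mem_offDiag, Finset.mem_insert,
        Finset.mem_singleton, Prod.mk.injEq, hFixdef]
      constructor
      · rintro ⟨⟨hp, hq, hne⟩, hpC, hqC⟩
        have hpi : p ∈ B ∩ C := Finset.mem_inter.mpr ⟨hp.1, hpC⟩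
        have hqi : q ∈ B ∩ C := Finset.mem_inter.mpr ⟨hq.1, hqC⟩
        rw [hset, Finset.mem_insert, Finset.mem_singleton] at hpi hqi
        rcases hpi with rfl | rfl <;> rcases hqi with rfl | rfl <;> tauto
      · have haB : a ∈ B := (Finset.mem_inter.mp hainter).1
        have haC : a ∈ C := (Finset.mem_inter.mp hainter).2
        have hbB : b ∈ B := (Finset.mem_inter.mp hbinter).1
        have hbC : b ∈ C := (Finset.mem_inter.mp hbinter).2
        rintro (⟨rfl, rfl⟩ | ⟨rfl, rfl⟩)
        · exact ⟨⟨⟨haB, hafix⟩, ⟨hbB, hbfix⟩, hab⟩, haC, hbC⟩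
        · exact ⟨⟨⟨hbB, hbfix⟩, ⟨haB, hafix⟩, Ne.symm hab⟩, hbC, haC⟩
    rw [heq]
    rw [Finset.card_insert_of_notMem (by simp [hab]), Finset.card_singleton]
  -- double counting
  have hcount : Fix.offDiag.card = 2 * T.card := by
    calc Fix.offDiag.card = ∑ pq ∈ Fix.offDiag, 1 := by rw [Finset.sum_const, smul_eq_mul, mul_one]
      _ = ∑ pq ∈ Fix.offDiag, (T.filter (fun C => pq.1 ∈ C ∧ pq.2 ∈ C)).card :=
          (Finset.sum_congr rfl fun pq hpq => (hone pq hpq).symm)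
      _ = ∑ pq ∈ Fix.offDiag, ∑ C ∈ T, (if pq.1 ∈ C ∧ pq.2 ∈ C then 1 else 0) :=
          Finset.sum_congr rfl fun pq _ => Finset.card_filter _ _
      _ = ∑ C ∈ T, ∑ pq ∈ Fix.offDiag, (if pq.1 ∈ C ∧ pq.2 ∈ C then 1 else 0) :=
          Finset.sum_comm
      _ = ∑ C ∈ T, (Fix.offDiag.filter (fun pq => pq.1 ∈ C ∧ pq.2 ∈ C)).card :=
          Finset.sum_congr rfl fun C _ => (Finset.card_filter _ _).symm
      _ = ∑ C ∈ T, 2 := Finset.sum_congr rfl htwo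
      _ = 2 * T.card := by rw [Finset.sum_const, smul_eq_mul, mul_comm]
  -- conclusion
  have hBfm : B ∈ 𝓑.filter (fun b => b.image σ = b) := Finset.mem_filter.mpr ⟨hB, hBfix⟩
  have hf : (𝓑.filter (fun b => b.image σ = b)).card = T.card + 1 := by
    rw [hTdef] at *
    have := Finset.card_erase_of_mem hBfm
    have hpos := Finset.card_pos.mpr ⟨B, hBfm⟩
    omega
  have hoff : Fix.offDiag.card = Fix.card * Fix.card - Fix.card := Finset.offDiag_card _
  have hmp : Fix.card * (Fix.card - 1) = Fix.card * Fix.card - Fix.card := nat_mul_pred _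
  rw [hf]
  have h2T : Fix.card * (Fix.card - 1) = 2 * T.card := by omega
  rw [h2T, Nat.mul_div_cancel_left _ (by norm_num : 0 < 2)]
end

section
/- Let D be a biplane with parameters (p², k, 2), where p is prime and k ≥ 4. Then every automorphism of D of order p has no fixed points. -/
open Finset

lemma orbit_lemma {α : Type*} [DecidableEq α] {p : ℕ} (hp : p.Prime)
    (g : Equiv.Perm α) (hg : g ^ p = 1) :
    ∀ S : Finset α, (∀ x ∈ S, g x ∈ S) →
      S.card ≡ (S.filter fun x => g x = x).card [MOD p] := by
  intro S
  induction S using Finset.strongInduction with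
  | _ S ih =>
    intro hS
    by_cases hfix : ∀ x ∈ S, g x = x
    · rw [Finset.filter_true_of_mem hfix]
    · push_neg at hfix
      obtain ⟨x, hxS, hx⟩ := hfix
      have hper : (⇑g)^[p] x = x := by
        rw [Equiv.Perm.iterate_eq_pow, hg]; rfl
      have hmp : Function.minimalPeriod (⇑g) x = p := by
        have hdvd : Function.minimalPeriod (⇑g) x ∣ p :=
          Function.IsPeriodicPt.minimalPeriod_dvd hper
        rcases (Nat.Prime.eq_one_or_self_of_dvd hp _ hdvd) with h1 | h1
        · exact absurd (Function.minimalPeriod_eq_one_iff_isFixedPt.mp h1) hx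
        · exact h1
      set O : Finset α := (Finset.range p).image (fun i => (g ^ i) x) with hO
      have hinjO : Set.InjOn (fun i => (g ^ i) x) (Finset.range p : Set ℕ) := by
        intro a ha b hb hab
        have := Function.iterate_injOn_Iio_minimalPeriod (f := ⇑g) (x := x)
        rw [hmp] at this
        simp only [Finset.coe_range, Set.mem_Iio] at *
        apply this ha hb
        simpa [Equiv.Perm.iterate_eq_pow] using hab
      have hcardO : O.card = p := by
        rw [hO, Finset.card_image_of_injOn hinjO, Finset.card_range]
      have hpowS : ∀ i, (g ^ i) x ∈ S := by
        intro i
        induction i with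
        | zero => simpa using hxS
        | succ n ihn =>
          have : g ^ (n + 1) = g * g ^ n := by rw [pow_succ']
          rw [this, Equiv.Perm.mul_apply]
          exact hS _ ihn
      have hOS : O ⊆ S := by
        intro y hy
        rw [hO, Finset.mem_image] at hy
        obtain ⟨i, _, rfl⟩ := hy
        exact hpowS i
      have hxO : x ∈ O := by
        rw [hO, Finset.mem_image]
        exact ⟨0, Finset.mem_range.mpr hp.pos, by simp⟩
      -- g maps O into O
      have hgO : ∀ y ∈ O, g y ∈ O := by
        intro y hy
        rw [hO, Finset.mem_image] at hy ⊢
        obtain ⟨i, hi, rfl⟩ := hy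
        rw [Finset.mem_range] at hi
        have hstep : g ((g ^ i) x) = (g ^ (i+1)) x := by
          rw [pow_succ', Equiv.Perm.mul_apply]
        rcases Nat.lt_or_ge (i+1) p with h | h
        · exact ⟨i+1, Finset.mem_range.mpr h, hstep.symm⟩
        · have : i + 1 = p := le_antisymm hi h
          refine ⟨0, Finset.mem_range.mpr hp.pos, ?_⟩
          rw [hstep, this, hg]; simp
      have himg : O.image g = O :=
        Finset.eq_of_subset_of_card_le
          (by intro y hy; rw [Finset.mem_image] at hy; obtain ⟨z, hz, rfl⟩ := hy; exact hgO z hz)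
          (by rw [Finset.card_image_of_injective _ g.injective])
      have hmemO : ∀ y, g y ∈ O → y ∈ O := by
        intro y hy
        rw [← himg, Finset.mem_image] at hy
        obtain ⟨z, hz, hzy⟩ := hy
        rwa [← g.injective hzy]
      -- no fixed points in O
      have hnofix : ∀ y ∈ O, g y ≠ y := by
        intro y hy hfy
        rw [hO, Finset.mem_image] at hy
        obtain ⟨i, _, rfl⟩ := hy
        apply hx
        have h1 : g ((g ^ i) x) = (g ^ i) (g x) := by
          rw [← Equiv.Perm.mul_apply, ← Equiv.Perm.mul_apply]
          congr 1
          exact Commute.eq (Commute.pow_right (Commute.refl g) i)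
        rw [h1] at hfy
        exact (g ^ i).injective hfy
      have hsub : S \ O ⊂ S := by
        apply Finset.sdiff_ssubset hOS
        exact ⟨x, hxO⟩
      have hinv' : ∀ y ∈ S \ O, g y ∈ S \ O := by
        intro y hy
        rw [Finset.mem_sdiff] at hy ⊢
        exact ⟨hS y hy.1, fun h => hy.2 (hmemO y h)⟩
      have hfilter : S.filter (fun y => g y = y) = (S \ O).filter (fun y => g y = y) := by
        ext y
        simp only [Finset.mem_filter, Finset.mem_sdiff]
        constructor
        · rintro ⟨hyS, hfy⟩
          exact ⟨⟨hyS, fun h => hnofix y h hfy⟩, hfy⟩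
        · rintro ⟨⟨hyS, _⟩, hfy⟩
          exact ⟨hyS, hfy⟩
      have hcards : S.card = (S \ O).card + p := by
        rw [Finset.card_sdiff_of_subset hOS, hcardO]
        have := Finset.card_le_card hOS
        omega
      rw [hfilter, hcards]
      calc (S \ O).card + p ≡ (S \ O).card + 0 [MOD p] :=
            Nat.ModEq.add_left _ (Nat.modEq_zero_iff_dvd.mpr dvd_rfl)
        _ = (S \ O).card := by omega
        _ ≡ ((S \ O).filter (fun y => g y = y)).card [MOD p] := ih _ hsub hinv'

lemma fix_small {α : Type*} [DecidableEq α] {p : ℕ} (hp : p.Prime) (hp3 : 3 ≤ p)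
    (g : Equiv.Perm α) (hg : g ^ p = 1) (S : Finset α)
    (hinv : ∀ x ∈ S, g x ∈ S) (h2 : S.card = 2) : ∀ x ∈ S, g x = x := by
  have h := orbit_lemma hp g hg S hinv
  rw [h2] at h
  have hle : (S.filter fun x => g x = x).card ≤ 2 := h2 ▸ Finset.card_le_card (Finset.filter_subset _ _)
  have heq : (S.filter fun x => g x = x).card = 2 := by
    have h1 : 2 % p = 2 := Nat.mod_eq_of_lt (by omega)
    have h2' : (S.filter fun x => g x = x).card % p = (S.filter fun x => g x = x).card :=
      Nat.mod_eq_of_lt (by omega)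
    unfold Nat.ModEq at h
    omega
  have : S.filter (fun x => g x = x) = S :=
    Finset.eq_of_subset_of_card_le (Finset.filter_subset _ _) (by omega)
  intro x hx
  rw [← this] at hx
  exact (Finset.mem_filter.mp hx).2

lemma count_kk {P : Type*} [Fintype P] [DecidableEq P]
    (p k : ℕ) (hppos : 0 < p) (hk4 : 4 ≤ k) (hv : Fintype.card P = p ^ 2)
    (𝓑 : Finset (Finset P)) (hcard : 𝓑.card = p ^ 2)
    (hk : ∀ b ∈ 𝓑, b.card = k)
    (hpair : ∀ q r : P, q ≠ r →
      (𝓑.filter (fun b => q ∈ b ∧ r ∈ b)).card = 2) :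
    k * (k - 1) = 2 * (p ^ 2 - 1) := by
  have key : ∑ x ∈ (Finset.univ : Finset P).offDiag,
      (𝓑.filter fun b => x.1 ∈ b ∧ x.2 ∈ b).card = ∑ b ∈ 𝓑, b.offDiag.card := by
    have lhs : ∀ x ∈ (Finset.univ : Finset P).offDiag,
        (𝓑.filter fun b => x.1 ∈ b ∧ x.2 ∈ b).card
          = ∑ b ∈ 𝓑, if x.1 ∈ b ∧ x.2 ∈ b then 1 else 0 := by
      intro x _; exact Finset.card_filter _ _
    rw [Finset.sum_congr rfl lhs, Finset.sum_comm]
    apply Finset.sum_congr rfl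
    intro b hb
    have : (Finset.univ : Finset P).offDiag.filter (fun x => x.1 ∈ b ∧ x.2 ∈ b)
        = b.offDiag := by
      ext ⟨a, c⟩
      simp only [Finset.mem_filter, Finset.mem_offDiag, Finset.mem_univ, true_and]
      tauto
    rw [← this, Finset.card_filter]
  have lhs2 : ∑ x ∈ (Finset.univ : Finset P).offDiag,
      (𝓑.filter fun b => x.1 ∈ b ∧ x.2 ∈ b).card = 2 * (p^2 * p^2 - p^2) := by
    rw [Finset.sum_congr rfl (fun x hx => hpair x.1 x.2 (Finset.mem_offDiag.mp hx).2.2),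
      Finset.sum_const, Finset.offDiag_card]
    simp [Finset.card_univ, hv, mul_comm]
  have rhs2 : ∑ b ∈ 𝓑, b.offDiag.card = p^2 * (k * k - k) := by
    rw [Finset.sum_congr rfl (fun b hb => by rw [Finset.offDiag_card, hk b hb]),
      Finset.sum_const, hcard]
    simp
  rw [lhs2, rhs2] at key
  have hp2 : 0 < p^2 := by positivity
  obtain ⟨a, ha⟩ : ∃ a, k = a + 1 := ⟨k - 1, by omega⟩
  obtain ⟨b, hb⟩ : ∃ b, p^2 = b + 1 := ⟨p^2 - 1, by omega⟩
  subst ha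
  rw [hb] at key ⊢
  have e1 : (b+1)*(b+1) - (b+1) = (b+1)*b := by
    have : (b+1)*(b+1) = (b+1)*b + (b+1) := by ring
    omega
  have e2 : (a+1)*(a+1) - (a+1) = (a+1)*a := by
    have : (a+1)*(a+1) = (a+1)*a + (a+1) := by ring
    omega
  rw [e1, e2] at key
  have e3 : 2*((b+1)*b) = (b+1)*(2*b) := by ring
  rw [e3] at key
  have := Nat.eq_of_mul_eq_mul_left (Nat.succ_pos b) key
  rw [Nat.add_sub_cancel, Nat.add_sub_cancel]
  exact this.symm

lemma count_rep {P : Type*} [Fintype P] [DecidableEq P]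
    (p k : ℕ) (hppos : 0 < p) (hk4 : 4 ≤ k) (hv : Fintype.card P = p ^ 2)
    (𝓑 : Finset (Finset P)) (hcard : 𝓑.card = p ^ 2)
    (hk : ∀ b ∈ 𝓑, b.card = k)
    (hpair : ∀ q r : P, q ≠ r →
      (𝓑.filter (fun b => q ∈ b ∧ r ∈ b)).card = 2)
    (hkk : k * (k - 1) = 2 * (p ^ 2 - 1)) (x : P) :
    (𝓑.filter fun b => x ∈ b).card = k := by
  have key : ∑ r ∈ Finset.univ.erase x, (𝓑.filter fun b => x ∈ b ∧ r ∈ b).card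
      = (𝓑.filter fun b => x ∈ b).card * (k - 1) := by
    have lhs : ∀ r ∈ Finset.univ.erase x,
        (𝓑.filter fun b => x ∈ b ∧ r ∈ b).card
          = ∑ b ∈ 𝓑, if x ∈ b ∧ r ∈ b then 1 else 0 := fun r _ => Finset.card_filter _ _
    rw [Finset.sum_congr rfl lhs, Finset.sum_comm]
    have inner : ∀ b ∈ 𝓑, (∑ r ∈ Finset.univ.erase x, if x ∈ b ∧ r ∈ b then 1 else 0)
        = if x ∈ b then k - 1 else 0 := by
      intro b hb
      by_cases hx : x ∈ b
      · rw [if_pos hx]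
        have : (Finset.univ.erase x).filter (fun r => x ∈ b ∧ r ∈ b) = b.erase x := by
          ext r
          simp only [Finset.mem_filter, Finset.mem_erase, Finset.mem_univ, true_and]
          tauto
        rw [← Finset.card_filter, this, Finset.card_erase_of_mem hx, hk b hb]
      · rw [if_neg hx]
        apply Finset.sum_eq_zero
        intro r _
        simp [hx]
    rw [Finset.sum_congr rfl inner, ← Finset.sum_filter, Finset.sum_const, smul_eq_mul]
  have lhs2 : ∑ r ∈ Finset.univ.erase x, (𝓑.filter fun b => x ∈ b ∧ r ∈ b).card
      = 2 * (p ^ 2 - 1) := by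
    rw [Finset.sum_congr rfl (fun r hr => hpair x r (Ne.symm (Finset.mem_erase.mp hr).1)),
      Finset.sum_const, Finset.card_erase_of_mem (Finset.mem_univ x), Finset.card_univ, hv,
      smul_eq_mul, mul_comm]
  rw [lhs2, ← hkk] at key
  exact Nat.eq_of_mul_eq_mul_right (by omega) key.symm

lemma count_inter {P : Type*} [Fintype P] [DecidableEq P]
    (p k : ℕ) (hppos : 0 < p) (hk4 : 4 ≤ k)
    (𝓑 : Finset (Finset P)) (hcard : 𝓑.card = p ^ 2)
    (hk : ∀ b ∈ 𝓑, b.card = k)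
    (hpair : ∀ q r : P, q ≠ r →
      (𝓑.filter (fun b => q ∈ b ∧ r ∈ b)).card = 2)
    (hkk : k * (k - 1) = 2 * (p ^ 2 - 1))
    (hrep : ∀ x : P, (𝓑.filter fun b => x ∈ b).card = k)
    (B : Finset P) (hB : B ∈ 𝓑) (C : Finset P) (hC : C ∈ 𝓑) (hBC : B ≠ C) :
    (B ∩ C).card = 2 := by
  set E := 𝓑.erase B with hE
  have hEcard : E.card = p ^ 2 - 1 := by rw [hE, Finset.card_erase_of_mem hB, hcard]
  -- (a)
  have haveA : ∑ b ∈ E, (B ∩ b).card = k * (k - 1) := by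
    have lhs : ∀ b ∈ E, (B ∩ b).card = ∑ x ∈ B, if x ∈ b then 1 else 0 := by
      intro b _
      have : B ∩ b = B.filter (fun x => x ∈ b) := by
        ext y; simp [Finset.mem_inter, Finset.mem_filter]
      rw [this, Finset.card_filter]
    rw [Finset.sum_congr rfl lhs, Finset.sum_comm]
    have inner : ∀ x ∈ B, (∑ b ∈ E, if x ∈ b then 1 else 0) = k - 1 := by
      intro x hx
      have : E.filter (fun b => x ∈ b) = (𝓑.filter (fun b => x ∈ b)).erase B := by
        ext b
        simp only [hE, Finset.mem_filter, Finset.mem_erase]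
        tauto
      rw [← Finset.card_filter, this,
        Finset.card_erase_of_mem (Finset.mem_filter.mpr ⟨hB, hx⟩), hrep]
    rw [Finset.sum_congr rfl inner, Finset.sum_const, smul_eq_mul, hk B hB]
  -- (b)
  have haveB : ∑ b ∈ E, (B ∩ b).offDiag.card = k * k - k := by
    have lhs : ∀ b ∈ E, (B ∩ b).offDiag.card
        = ∑ x ∈ B.offDiag, if x.1 ∈ b ∧ x.2 ∈ b then 1 else 0 := by
      intro b _
      have : (B ∩ b).offDiag = B.offDiag.filter (fun x => x.1 ∈ b ∧ x.2 ∈ b) := by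
        ext ⟨u, v⟩
        simp only [Finset.mem_offDiag, Finset.mem_filter, Finset.mem_inter]
        tauto
      rw [this, Finset.card_filter]
    rw [Finset.sum_congr rfl lhs, Finset.sum_comm]
    have inner : ∀ x ∈ B.offDiag,
        (∑ b ∈ E, if x.1 ∈ b ∧ x.2 ∈ b then 1 else 0) = 1 := by
      intro x hx
      rw [Finset.mem_offDiag] at hx
      have : E.filter (fun b => x.1 ∈ b ∧ x.2 ∈ b)
          = (𝓑.filter (fun b => x.1 ∈ b ∧ x.2 ∈ b)).erase B := by
        ext b
        simp only [hE, Finset.mem_filter, Finset.mem_erase]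
        tauto
      rw [← Finset.card_filter, this,
        Finset.card_erase_of_mem (Finset.mem_filter.mpr ⟨hB, hx.1, hx.2.1⟩),
        hpair x.1 x.2 hx.2.2]
    rw [Finset.sum_congr rfl inner, Finset.sum_const, smul_eq_mul, mul_one,
      Finset.offDiag_card, hk B hB]
  -- integer variance argument
  set g : Finset P → ℤ := fun b => ((B ∩ b).card : ℤ) with hg
  have zsumA : ∑ b ∈ E, g b = (k : ℤ) * ((k : ℤ) - 1) := by
    rw [hg, ← Nat.cast_sum]
    rw [haveA]
    have : ((k - 1 : ℕ) : ℤ) = (k : ℤ) - 1 := by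
      have : 1 ≤ k := by omega
      push_cast [this]; ring
    push_cast [← this]
    rw [← Nat.cast_mul]
  have zsumB : ∑ b ∈ E, (g b ^ 2 - g b) = (k : ℤ) * (k : ℤ) - (k : ℤ) := by
    have cast1 : ∀ b ∈ E, g b ^ 2 - g b = (((B ∩ b).offDiag.card : ℕ) : ℤ) := by
      intro b _
      rw [Finset.offDiag_card, hg]
      rcases Nat.eq_zero_or_pos (B ∩ b).card with h | h
      · simp [hg, h]
      · have hle : (B ∩ b).card ≤ (B ∩ b).card * (B ∩ b).card :=
          Nat.le_mul_of_pos_left _ h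
        push_cast [Nat.cast_sub hle]
        ring
    have hlek : k ≤ k * k := Nat.le_mul_of_pos_left _ (by omega)
    rw [Finset.sum_congr rfl cast1, ← Nat.cast_sum, haveB, Nat.cast_sub hlek, Nat.cast_mul]
  have expand : ∑ b ∈ E, (g b - 2)^2
      = (∑ b ∈ E, (g b ^ 2 - g b)) - 3 * (∑ b ∈ E, g b) + 4 * (E.card : ℤ) := by
    have hterm : ∀ b ∈ E, (g b - 2)^2 = (g b ^ 2 - g b) - 3 * g b + 4 := fun b _ => by ring
    rw [Finset.sum_congr rfl hterm, Finset.sum_add_distrib, Finset.sum_sub_distrib,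
      ← Finset.mul_sum, Finset.sum_const]
    simp [mul_comm]
  have hE1 : (E.card : ℤ) = (p : ℤ)^2 - 1 := by
    have h1 : 1 ≤ p^2 := by have : 0 < p^2 := by positivity
                            omega
    rw [hEcard, Nat.cast_sub h1]
    push_cast
    ring
  have hkkz : (k : ℤ) * ((k : ℤ) - 1) = 2 * ((p : ℤ)^2 - 1) := by
    have h1 : 1 ≤ k := by omega
    have h2 : 1 ≤ p^2 := by have : 0 < p^2 := by positivity
                            omega
    zify [h1, h2] at hkk
    exact hkk
  have zero : ∑ b ∈ E, (g b - 2)^2 = 0 := by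
    rw [expand, zsumA, zsumB, hE1]
    linear_combination (-2 : ℤ) * hkkz
  have each := (Finset.sum_eq_zero_iff_of_nonneg (fun b _ => sq_nonneg (g b - 2))).mp zero
  have hCE : C ∈ E := Finset.mem_erase.mpr ⟨Ne.symm hBC, hC⟩
  have hgC : g C = 2 := by
    have h := each C hCE
    have := sq_eq_zero_iff.mp h
    linarith
  simp only [hg] at hgC
  exact_mod_cast hgC

/-- Let D be a biplane with parameters (p², k, 2), p prime and k ≥ 4. Then
every automorphism of D of order p has no fixed points. -/
theorem stmt_9 {P : Type*} [Fintype P] [DecidableEq P]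
    (p k : ℕ) (hp : p.Prime) (hv : Fintype.card P = p ^ 2) (hk4 : 4 ≤ k)
    (𝓑 : Finset (Finset P)) (hcard : 𝓑.card = p ^ 2)
    (hk : ∀ b ∈ 𝓑, b.card = k)
    (hpair : ∀ q r : P, q ≠ r →
      (𝓑.filter (fun b => q ∈ b ∧ r ∈ b)).card = 2)
    (σ : Equiv.Perm P) (hσ : ∀ b ∈ 𝓑, b.image σ ∈ 𝓑)
    (hord : orderOf σ = p) :
    ∀ q : P, σ q ≠ q := by
  intro q0 hq0
  have hppos : 0 < p := hp.pos
  have hkk := count_kk p k hppos hk4 hv 𝓑 hcard hk hpair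
  have hrep := count_rep p k hppos hk4 hv 𝓑 hcard hk hpair hkk
  have hint := count_inter p k hppos hk4 𝓑 hcard hk hpair hkk hrep
  have hp2pos : 0 < p ^ 2 := by positivity
  -- arithmetic consequences
  obtain ⟨a, ha⟩ : ∃ a, k = a + 1 := ⟨k - 1, by omega⟩
  have ha3 : 3 ≤ a := by omega
  have hpk : (a + 1) * a = 2 * (p ^ 2 - 1) := by
    rw [← hkk, ha]; simp
  obtain ⟨bb, hbb⟩ : ∃ bb, p ^ 2 = bb + 1 := ⟨p ^ 2 - 1, by omega⟩
  have hpk2 : (a + 1) * a = 2 * bb := by rw [hbb] at hpk; simpa using hpk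
  have hkk2 : (a + 1) * a + 2 = 2 * p ^ 2 := by omega
  have hp3 : 3 ≤ p := by
    by_contra h
    push_neg at h
    have h12 : 4 * 3 ≤ (a + 1) * a := Nat.mul_le_mul (by omega) ha3
    have hple : p ^ 2 ≤ 4 := by
      calc p ^ 2 ≤ 2 ^ 2 := Nat.pow_le_pow_left (by omega) 2
        _ = 4 := by norm_num
    omega
  have hpp : p ^ 2 = p * p := by ring
  have hkgtp : p + 1 ≤ k := by
    by_contra h
    push_neg at h
    have h1 : (a + 1) * a ≤ p * p := Nat.mul_le_mul (by omega) (by omega)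
    have h2 : 9 ≤ p * p := Nat.mul_le_mul hp3 hp3
    omega
  have hklt2p : k < 2 * p := by
    by_contra h
    push_neg at h
    obtain ⟨c, hc⟩ : ∃ c, p = c + 1 := ⟨p - 1, by omega⟩
    have m1 : (2 * (c + 1)) * (2 * c + 1) ≤ (a + 1) * a := Nat.mul_le_mul (by omega) (by omega)
    have e2 : (2 * (c + 1)) * (2 * c + 1) + 2 * (c + 1) = 4 * ((c + 1) * (c + 1)) := by ring
    have e3 : p ^ 2 = (c + 1) * (c + 1) := by rw [hc]; ring
    have e4 : c + 1 ≤ (c + 1) * (c + 1) := Nat.le_mul_of_pos_left _ (by omega)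
    omega
  -- permutation facts
  have hσp : σ ^ p = 1 := by rw [← hord]; exact pow_orderOf_eq_one σ
  set F := Finset.univ.filter (fun x : P => σ x = x) with hF
  have hq0F : q0 ∈ F := by simp [hF, hq0]
  have hmemF : ∀ x, x ∈ F ↔ σ x = x := by intro x; simp [hF]
  have hfmod : p ^ 2 ≡ F.card [MOD p] := by
    have := orbit_lemma hp σ hσp Finset.univ (fun x _ => Finset.mem_univ _)
    rwa [Finset.card_univ, hv] at this
  have hpf : p ∣ F.card := by
    have h1 : p ^ 2 % p = 0 := by
      rw [hpp]
      exact Nat.mul_mod_right p p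
    have h2 : F.card % p = 0 := by
      have := hfmod
      unfold Nat.ModEq at this
      omega
    exact Nat.dvd_of_mod_eq_zero h2
  have hfp : p ≤ F.card := Nat.le_of_dvd (Finset.card_pos.mpr ⟨q0, hq0F⟩) hpf
  -- induced permutation on blocks
  set τ : Equiv.Perm (Finset P) := σ.finsetCongr with hτ
  have hτapp : ∀ S : Finset P, τ S = S.image σ := by
    intro S
    rw [hτ, Equiv.finsetCongr_apply, Finset.map_eq_image]
    rfl
  have hτpow : ∀ (n : ℕ) (S : Finset P), (τ ^ n) S = S.image (⇑(σ ^ n)) := by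
    intro n
    induction n with
    | zero => intro S; simp
    | succ n ihn =>
      intro S
      rw [pow_succ, Equiv.Perm.mul_apply, hτapp, ihn, Finset.image_image, pow_succ,
        Equiv.Perm.coe_mul]
  have hτp : τ ^ p = 1 := by
    apply Equiv.ext
    intro S
    rw [hτpow, hσp]
    simp
  have hστB : ∀ b ∈ 𝓑, τ b ∈ 𝓑 := fun b hb => by rw [hτapp]; exact hσ b hb
  -- blocks through two fixed points are fixed
  have hfixblock : ∀ q r : P, σ q = q → σ r = r → q ≠ r →
      ∀ b ∈ 𝓑, q ∈ b → r ∈ b → b.image σ = b := by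
    intro q r hq hr hqr b hb hqb hrb
    have hS : ∀ c ∈ 𝓑.filter (fun c => q ∈ c ∧ r ∈ c),
        τ c ∈ 𝓑.filter (fun c => q ∈ c ∧ r ∈ c) := by
      intro c hc
      rw [Finset.mem_filter] at hc ⊢
      obtain ⟨hc𝓑, hqc, hrc⟩ := hc
      refine ⟨hστB c hc𝓑, ?_, ?_⟩ <;> rw [hτapp]
      · exact hq ▸ Finset.mem_image_of_mem σ hqc
      · exact hr ▸ Finset.mem_image_of_mem σ hrc
    have := fix_small hp hp3 τ hτp _ hS (hpair q r hqr) b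
      (Finset.mem_filter.mpr ⟨hb, hqb, hrb⟩)
    rwa [hτapp] at this
  -- common points of two fixed blocks are fixed
  have hfixpt : ∀ B ∈ 𝓑, ∀ C ∈ 𝓑, B ≠ C → B.image σ = B → C.image σ = C →
      ∀ x ∈ B ∩ C, σ x = x := by
    intro B hB C hC hBC hfB hfC
    apply fix_small hp hp3 σ hσp (B ∩ C) ?_ (hint B hB C hC hBC)
    intro x hx
    rw [Finset.mem_inter] at hx ⊢
    exact ⟨hfB ▸ Finset.mem_image_of_mem σ hx.1, hfC ▸ Finset.mem_image_of_mem σ hx.2⟩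
  -- number of fixed blocks through a fixed point
  set nn : P → ℕ := fun q => (𝓑.filter (fun b => q ∈ b ∧ b.image σ = b)).card with hnn
  have hnmod : ∀ q : P, σ q = q → k ≡ nn q [MOD p] := by
    intro q hq
    have hinv : ∀ b ∈ 𝓑.filter (fun b => q ∈ b), τ b ∈ 𝓑.filter (fun b => q ∈ b) := by
      intro b hb
      rw [Finset.mem_filter] at hb ⊢
      refine ⟨hστB b hb.1, ?_⟩
      rw [hτapp]
      exact hq ▸ Finset.mem_image_of_mem σ hb.2
    have h := orbit_lemma hp τ hτp _ hinv
    rw [hrep q] at h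
    have heq : (𝓑.filter (fun b => q ∈ b)).filter (fun b => τ b = b)
        = 𝓑.filter (fun b => q ∈ b ∧ b.image σ = b) := by
      ext b
      simp only [Finset.mem_filter, hτapp, and_assoc]
    rwa [heq] at h
  have hnle : ∀ q : P, nn q ≤ k := by
    intro q
    rw [hnn, ← hrep q]
    apply Finset.card_le_card
    intro b hb
    rw [Finset.mem_filter] at hb ⊢
    exact ⟨hb.1, hb.2.1⟩
  have hncase : ∀ q : P, σ q = q → nn q = k ∨ nn q + p = k := by
    intro q hq
    have hnleq := hnle q
    have hdvd : p ∣ k - nn q := (Nat.modEq_iff_dvd' hnleq).mp (hnmod q hq).symm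
    obtain ⟨c, hc⟩ := hdvd
    have hc2 : c ≤ 1 := by
      by_contra hh
      push_neg at hh
      have h2 : p * 2 ≤ p * c := Nat.mul_le_mul_left p hh
      omega
    rcases Nat.lt_or_ge c 1 with hc1 | hc1
    · left
      have : c = 0 := by omega
      rw [this, Nat.mul_zero] at hc
      omega
    · right
      have : c = 1 := by omega
      rw [this, Nat.mul_one] at hc
      omega
  -- the key relation: nn q * (nn q - 1) = 2 * (F.card - 1)
  have hnq_eq : ∀ q : P, σ q = q → nn q * nn q - nn q = 2 * (F.card - 1) := by
    intro q hq
    set Fq := 𝓑.filter (fun b => q ∈ b ∧ b.image σ = b) with hFq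
    have claim1 : ∀ BC ∈ Fq.offDiag, ((BC.1 ∩ BC.2).erase q).card = 1 := by
      rintro ⟨B, C⟩ hBC
      rw [Finset.mem_offDiag] at hBC
      obtain ⟨hB, hC, hne⟩ := hBC
      rw [Finset.mem_filter] at hB hC
      have h2 : (B ∩ C).card = 2 := hint B hB.1 C hC.1 hne
      have hqin : q ∈ B ∩ C := Finset.mem_inter.mpr ⟨hB.2.1, hC.2.1⟩
      rw [Finset.card_erase_of_mem hqin, h2]
    have claim2 : ∀ BC ∈ Fq.offDiag, (BC.1 ∩ BC.2).erase q
        = (F.erase q).filter (fun r => r ∈ BC.1 ∧ r ∈ BC.2) := by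
      rintro ⟨B, C⟩ hBC
      rw [Finset.mem_offDiag] at hBC
      obtain ⟨hB, hC, hne⟩ := hBC
      rw [Finset.mem_filter] at hB hC
      ext r
      simp only [Finset.mem_erase, Finset.mem_inter, Finset.mem_filter, hmemF]
      constructor
      · rintro ⟨hrq, hrB, hrC⟩
        exact ⟨⟨hrq, hfixpt B hB.1 C hC.1 hne hB.2.2 hC.2.2 r
          (Finset.mem_inter.mpr ⟨hrB, hrC⟩)⟩, hrB, hrC⟩
      · rintro ⟨⟨hrq, _⟩, hrB, hrC⟩
        exact ⟨hrq, hrB, hrC⟩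
    have claim3 : ∀ r ∈ F.erase q, Fq.offDiag.filter (fun BC => r ∈ BC.1 ∧ r ∈ BC.2)
        = (𝓑.filter (fun b => q ∈ b ∧ r ∈ b)).offDiag := by
      intro r hr
      rw [Finset.mem_erase, hmemF] at hr
      ext ⟨B, C⟩
      simp only [Finset.mem_filter, Finset.mem_offDiag, hFq]
      constructor
      · rintro ⟨⟨⟨hB, hqB, _⟩, ⟨hC, hqC, _⟩, hne⟩, hrB, hrC⟩
        exact ⟨⟨hB, hqB, hrB⟩, ⟨hC, hqC, hrC⟩, hne⟩
      · rintro ⟨⟨hB, hqB, hrB⟩, ⟨hC, hqC, hrC⟩, hne⟩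
        exact ⟨⟨⟨hB, hqB, hfixblock q r hq hr.2 (Ne.symm hr.1) B hB hqB hrB⟩,
          ⟨hC, hqC, hfixblock q r hq hr.2 (Ne.symm hr.1) C hC hqC hrC⟩, hne⟩, hrB, hrC⟩
    -- double counting
    have T1 : ∑ BC ∈ Fq.offDiag, ((BC.1 ∩ BC.2).erase q).card = nn q * nn q - nn q := by
      rw [Finset.sum_congr rfl claim1, Finset.sum_const, smul_eq_mul, mul_one,
        Finset.offDiag_card]
    have T2 : ∑ BC ∈ Fq.offDiag, ((BC.1 ∩ BC.2).erase q).card = 2 * (F.card - 1) := by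
      have step1 : ∀ BC ∈ Fq.offDiag, ((BC.1 ∩ BC.2).erase q).card
          = ∑ r ∈ F.erase q, if r ∈ BC.1 ∧ r ∈ BC.2 then 1 else 0 := by
        intro BC hBC
        rw [claim2 BC hBC, Finset.card_filter]
      rw [Finset.sum_congr rfl step1, Finset.sum_comm]
      have step2 : ∀ r ∈ F.erase q,
          (∑ BC ∈ Fq.offDiag, if r ∈ BC.1 ∧ r ∈ BC.2 then 1 else 0) = 2 := by
        intro r hr
        rw [← Finset.card_filter, claim3 r hr, Finset.offDiag_card,
          hpair q r (by rw [Finset.mem_erase, hmemF] at hr; exact Ne.symm hr.1)]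
      rw [Finset.sum_congr rfl step2, Finset.sum_const, smul_eq_mul, mul_comm,
        Finset.card_erase_of_mem (by rw [hmemF]; exact hq)]
    omega
  -- case split on whether some fixed point lies on k fixed blocks
  by_cases hexists : ∃ q : P, σ q = q ∧ nn q = k
  · obtain ⟨q, hq, hnk⟩ := hexists
    have h1 := hnq_eq q hq
    rw [hnk] at h1
    have e2 : k * k = (a + 1) * (a + 1) := by rw [ha]
    have e3 : (a + 1) * (a + 1) = (a + 1) * a + (a + 1) := by ring
    have hF1 : 1 ≤ F.card := Finset.card_pos.mpr ⟨q0, hq0F⟩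
    have hfcard : F.card = p ^ 2 := by omega
    have hFuniv : F = Finset.univ := Finset.eq_univ_of_card F (by rw [hfcard, hv])
    have hσ1 : σ = 1 := by
      apply Equiv.ext
      intro x
      have hx : x ∈ F := hFuniv ▸ Finset.mem_univ x
      rw [hmemF] at hx
      simpa using hx
    rw [hσ1, orderOf_one] at hord
    have := hp.one_lt
    omega
  · push_neg at hexists
    have hall : ∀ q : P, σ q = q → nn q + p = k :=
      fun q hq => (hncase q hq).resolve_left (hexists q hq)
    set O : P → Finset (Finset P) :=
      fun q => 𝓑.filter (fun b => q ∈ b ∧ ¬(b.image σ = b)) with hO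
    have hOcard : ∀ q : P, σ q = q → (O q).card = p := by
      intro q hq
      have hsplit := Finset.card_filter_add_card_filter_not
        (s := 𝓑.filter (fun b => q ∈ b)) (fun b => b.image σ = b)
      have e1 : (𝓑.filter (fun b => q ∈ b)).filter (fun b => b.image σ = b)
          = 𝓑.filter (fun b => q ∈ b ∧ b.image σ = b) := by
        rw [Finset.filter_filter]
      have e2 : (𝓑.filter (fun b => q ∈ b)).filter (fun b => ¬(b.image σ = b))
          = O q := by
        rw [hO, Finset.filter_filter]
      have e4 : nn q = (𝓑.filter (fun b => q ∈ b ∧ b.image σ = b)).card := by rw [hnn]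
      rw [e1, e2, hrep q] at hsplit
      have := hall q hq
      omega
    have hdisjO : ∀ x ∈ F.erase q0, ∀ y ∈ F.erase q0, x ≠ y → Disjoint (O x) (O y) := by
      intro x hx y hy hxy
      rw [Finset.mem_erase, hmemF] at hx hy
      rw [Finset.disjoint_left]
      intro b hbx hby
      rw [hO, Finset.mem_filter] at hbx hby
      exact hbx.2.2 (hfixblock x y hx.2 hy.2 hxy b hbx.1 hbx.2.1 hby.2.1)
    have hUcard : ((F.erase q0).biUnion O).card = (F.card - 1) * p := by
      rw [Finset.card_biUnion hdisjO,
        Finset.sum_congr rfl (fun x hx => hOcard x ((hmemF x).mp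
          (Finset.mem_of_mem_erase hx))),
        Finset.sum_const, smul_eq_mul, Finset.card_erase_of_mem hq0F]
    have hdisj2 : Disjoint (𝓑.filter (fun b => q0 ∈ b)) ((F.erase q0).biUnion O) := by
      rw [Finset.disjoint_left]
      intro b hb hbU
      rw [Finset.mem_filter] at hb
      rw [Finset.mem_biUnion] at hbU
      obtain ⟨x, hx, hbO⟩ := hbU
      rw [Finset.mem_erase, hmemF] at hx
      rw [hO, Finset.mem_filter] at hbO
      exact hbO.2.2 (hfixblock q0 x hq0 hx.2 (Ne.symm hx.1) b hb.1 hb.2 hbO.2.1)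
    have hsub : (𝓑.filter (fun b => q0 ∈ b)) ∪ ((F.erase q0).biUnion O) ⊆ 𝓑 := by
      intro b hb
      rw [Finset.mem_union] at hb
      rcases hb with h | h
      · exact (Finset.mem_filter.mp h).1
      · rw [Finset.mem_biUnion] at h
        obtain ⟨x, _, h⟩ := h
        rw [hO, Finset.mem_filter] at h
        exact h.1
    have hbound := Finset.card_le_card hsub
    rw [Finset.card_union_of_disjoint hdisj2, hrep q0, hUcard, hcard] at hbound
    have hmul : (p - 1) * p ≤ (F.card - 1) * p := Nat.mul_le_mul_right p (by omega)
    obtain ⟨m, hm⟩ : ∃ m, p = m + 1 := ⟨p - 1, by omega⟩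
    have e5 : (p - 1) * p + p = p * p := by rw [hm, Nat.add_sub_cancel]; ring
    omega
end

section
/- If D is a biplane with parameters (79,13,2) and x is a nontrivial automorphism of 3-power order, then x fixes exactly one point and exactly one block. -/
/-!
Since σ has 3-power order, every σ-invariant set of points or of blocks has as many fixed
elements as its size modulo 3, and is fixed pointwise if it has at most two elements. So the two
blocks through two fixed points are fixed, and the two points common to two fixed blocks are
fixed: the fixed points and fixed blocks form a biplane of their own. There are f ≡ 79 ≡ 1 fixed
points, and a fixed point lies on c ≡ 13 ≡ 1 fixed blocks, where c(c - 1) = 2(f - 1).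

A non-fixed point y lies on at most one fixed block, and every other block through y contains at
most one fixed point; as y is joined to each fixed point by two blocks, 2f ≤ 12 + 13. Hence
(c, f) is (1, 1) or (4, 7). If f = 7, every non-fixed point lies on exactly one fixed block, and
counting the points of the fixed blocks gives 13 s = 7 · 4 + 72, which is impossible. So f = 1;
two fixed blocks would then share two fixed points, so s ≤ 1, and s ≡ 79 ≡ 1 gives s = 1.
-/

open Finset

theorem Finset.offDiag_filter {α : Type*} [DecidableEq α] (s : Finset α) (q : α → Prop)
    [DecidablePred q] : (s.filter q).offDiag = s.offDiag.filter (fun a => q a.1 ∧ q a.2) := by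
  ext ⟨a, b⟩
  simp only [mem_offDiag, mem_filter]
  tauto

namespace Equiv.Perm

variable {α : Type*} [DecidableEq α] {σ : Perm α} {p n : ℕ} [Fact p.Prime]

theorem card_modEq_card_filter_apply_eq (hσ : σ ^ p ^ n = 1) {S : Finset α}
    (hS : ∀ a ∈ S, σ a ∈ S) : #S ≡ #{a ∈ S | σ a = a} [MOD p] := by
  set τ := σ.subtypePermOfFintype hS
  have hτ : τ ^ p ^ n = 1 := by
    rw [subtypePerm_pow]; ext; simp [hσ]
  have hfix : τ.supportᶜ.map (Function.Embedding.subtype _) = {a ∈ S | σ a = a} := by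
    ext a; simp [τ, and_comm]
  have h := (card_compl_support_modEq hτ).symm
  rwa [Fintype.card_coe, ← card_map (Function.Embedding.subtype _), hfix] at h

theorem apply_eq_of_mem_of_card_lt (hσ : σ ^ p ^ n = 1) {S : Finset α}
    (hS : ∀ a ∈ S, σ a ∈ S) (hSp : #S < p) {a : α} (ha : a ∈ S) : σ a = a := by
  have hle := card_filter_le S (fun a => σ a = a)
  have heq : #{a ∈ S | σ a = a} = #S :=
    (Nat.ModEq.eq_of_lt_of_lt (card_modEq_card_filter_apply_eq hσ hS) hSp (by omega)).symm
  exact card_filter_eq_iff.1 heq a ha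

end Equiv.Perm

section Design

variable {P : Type*} [Fintype P] [DecidableEq P] {𝓑 : Finset (Finset P)} {k l : ℕ}

theorem card_blocks_through_mul (hk : ∀ b ∈ 𝓑, #b = k)
    (hpair : ∀ x y : P, x ≠ y → #{b ∈ 𝓑 | x ∈ b ∧ y ∈ b} = l) (x : P) :
    #{b ∈ 𝓑 | x ∈ b} * (k - 1) = l * (Fintype.card P - 1) := by
  have h : ∑ b ∈ 𝓑 with x ∈ b, #{y ∈ univ.erase x | y ∈ b}
      = ∑ y ∈ univ.erase x, #{b ∈ {b ∈ 𝓑 | x ∈ b} | y ∈ b} :=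
    sum_card_bipartiteAbove_eq_sum_card_bipartiteBelow _
  have hleft : ∀ b ∈ {b ∈ 𝓑 | x ∈ b}, #{y ∈ univ.erase x | y ∈ b} = k - 1 := by
    intro b hb
    rw [mem_filter] at hb
    rw [filter_mem_eq_inter, erase_inter, univ_inter, card_erase_of_mem hb.2, hk b hb.1]
  have hright : ∀ y ∈ univ.erase x, #{b ∈ {b ∈ 𝓑 | x ∈ b} | y ∈ b} = l := by
    intro y hy
    rw [filter_filter]
    exact hpair x y (ne_of_mem_erase hy).symm
  rw [sum_congr rfl hleft, sum_congr rfl hright, sum_const, sum_const,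
    card_erase_of_mem (mem_univ x), card_univ, smul_eq_mul, smul_eq_mul] at h
  rw [h, mul_comm]

theorem card_inter_eq_of_symmetric (hk : ∀ b ∈ 𝓑, #b = k)
    (hpair : ∀ x y : P, x ≠ y → #{b ∈ 𝓑 | x ∈ b ∧ y ∈ b} = l)
    (hsym : #𝓑 = Fintype.card P) (hr : ∀ x : P, #{b ∈ 𝓑 | x ∈ b} = k)
    {B C : Finset P} (hB : B ∈ 𝓑) (hC : C ∈ 𝓑) (hBC : B ≠ C) : #(B ∩ C) = l := by
  have hsum : ∑ D ∈ 𝓑, #(B ∩ D) = #B * k := by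
    have h : ∑ D ∈ 𝓑, #{y ∈ B | y ∈ D} = ∑ y ∈ B, #{D ∈ 𝓑 | y ∈ D} :=
      sum_card_bipartiteAbove_eq_sum_card_bipartiteBelow _
    simp only [filter_mem_eq_inter, hr, sum_const, smul_eq_mul] at h
    exact h
  have hsum_offDiag : ∑ D ∈ 𝓑, #(B ∩ D).offDiag = #B.offDiag * l := by
    have h : ∑ D ∈ 𝓑, #{yz ∈ B.offDiag | yz.1 ∈ D ∧ yz.2 ∈ D}
        = ∑ yz ∈ B.offDiag, #{D ∈ 𝓑 | yz.1 ∈ D ∧ yz.2 ∈ D} :=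
      sum_card_bipartiteAbove_eq_sum_card_bipartiteBelow _
    rw [sum_congr rfl fun yz hyz => hpair yz.1 yz.2 (mem_offDiag.1 hyz).2.2, sum_const,
      smul_eq_mul] at h
    simp only [← offDiag_filter, filter_mem_eq_inter] at h
    exact h
  obtain ⟨x⟩ : Nonempty P := Fintype.card_pos_iff.1 (hsym ▸ card_pos.2 ⟨B, hB⟩)
  have hrel : (k : ℤ) * (k - 1) = l * (#𝓑 - 1) := by
    have h := card_blocks_through_mul hk hpair x
    rw [hr, ← hsym, Nat.mul_sub_one] at h
    zify [Nat.le_mul_self k, card_pos.2 ⟨B, hB⟩] at h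
    linear_combination h
  -- the intersection sizes with the blocks `D ≠ B` have mean `l` and variance `0`
  have hvar : ∑ D ∈ 𝓑, ((#(B ∩ D) : ℤ) - l) ^ 2 = ((k : ℤ) - l) ^ 2 := by
    have hterm : ∀ D ∈ 𝓑, ((#(B ∩ D) : ℤ) - l) ^ 2
        = #(B ∩ D).offDiag + (1 - 2 * l) * #(B ∩ D) + l ^ 2 := by
      intro D _
      rw [offDiag_card, Nat.cast_sub (Nat.le_mul_self _)]
      push_cast
      ring
    rw [sum_congr rfl hterm, sum_add_distrib, sum_add_distrib, ← Nat.cast_sum, hsum_offDiag,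
      ← mul_sum, ← Nat.cast_sum, hsum, sum_const, offDiag_card, hk B hB, nsmul_eq_mul]
    push_cast [Nat.cast_sub (Nat.le_mul_self k)]
    linear_combination -(l : ℤ) * hrel
  rw [← add_sum_erase 𝓑 _ hB, inter_self, hk B hB, add_eq_left] at hvar
  have h := (sum_eq_zero_iff_of_nonneg fun _ _ => sq_nonneg _).1 hvar C (mem_erase.2 ⟨hBC.symm, hC⟩)
  have : (#(B ∩ C) : ℤ) = l := by nlinarith
  exact_mod_cast this

end Design

theorem MulAction.toPerm_pow_eq_one {G α : Type*} [Group G] [MulAction G α] {g : G} {m : ℕ}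
    (hg : g ^ m = 1) : (MulAction.toPerm g : Equiv.Perm α) ^ m = 1 := by
  rw [← MulAction.toPermHom_apply, ← map_pow, hg, map_one]

section Automorphism

open Equiv Perm
open scoped Pointwise

variable {P : Type*} [DecidableEq P] {𝓑 : Finset (Finset P)} {σ : Perm P} {p n k l : ℕ}
  [Fact p.Prime]

def fixedBlocks (𝓑 : Finset (Finset P)) (σ : Perm P) : Finset (Finset P) :=
  {b ∈ 𝓑 | b.image σ = b}

theorem mem_fixedBlocks {b : Finset P} : b ∈ fixedBlocks 𝓑 σ ↔ b ∈ 𝓑 ∧ b.image σ = b :=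
  mem_filter

theorem card_modEq_card_filter_image_eq (hσ : σ ^ p ^ n = 1) {T : Finset (Finset P)}
    (hT : ∀ b ∈ T, b.image σ ∈ T) : #T ≡ #{b ∈ T | b.image σ = b} [MOD p] :=
  card_modEq_card_filter_apply_eq (MulAction.toPerm_pow_eq_one hσ) hT

theorem card_fixedBlocks_through_modEq (hσ : σ ^ p ^ n = 1) (h𝓑σ : ∀ b ∈ 𝓑, b.image σ ∈ 𝓑)
    {x : P} (hx : σ x = x) : #{b ∈ 𝓑 | x ∈ b} ≡ #{b ∈ fixedBlocks 𝓑 σ | x ∈ b} [MOD p] := by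
  rw [fixedBlocks, filter_comm]
  refine card_modEq_card_filter_image_eq hσ fun b hb => ?_
  rw [mem_filter] at hb ⊢
  exact ⟨h𝓑σ b hb.1, hx ▸ mem_image_of_mem σ hb.2⟩

theorem image_eq_of_mem_of_mem (hσ : σ ^ p ^ n = 1) (h𝓑σ : ∀ b ∈ 𝓑, b.image σ ∈ 𝓑)
    (hpair : ∀ x y : P, x ≠ y → #{b ∈ 𝓑 | x ∈ b ∧ y ∈ b} = l) (hlp : l < p)
    {x y : P} (hx : σ x = x) (hy : σ y = y) (hxy : x ≠ y)
    {b : Finset P} (hb : b ∈ 𝓑) (hxb : x ∈ b) (hyb : y ∈ b) : b.image σ = b := by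
  refine apply_eq_of_mem_of_card_lt (MulAction.toPerm_pow_eq_one hσ) (fun c hc => ?_)
    (hpair x y hxy ▸ hlp) (mem_filter.2 ⟨hb, hxb, hyb⟩)
  rw [mem_filter] at hc ⊢
  exact ⟨h𝓑σ c hc.1, hx ▸ mem_image_of_mem σ hc.2.1, hy ▸ mem_image_of_mem σ hc.2.2⟩

theorem apply_eq_of_mem_inter (hσ : σ ^ p ^ n = 1)
    (hinter : ∀ B ∈ 𝓑, ∀ C ∈ 𝓑, B ≠ C → #(B ∩ C) = l) (hlp : l < p)
    {B C : Finset P} (hB : B ∈ fixedBlocks 𝓑 σ) (hC : C ∈ fixedBlocks 𝓑 σ) (hBC : B ≠ C)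
    {a : P} (ha : a ∈ B ∩ C) : σ a = a := by
  rw [mem_fixedBlocks] at hB hC
  refine apply_eq_of_mem_of_card_lt hσ (fun c hc => ?_) (hinter B hB.1 C hC.1 hBC ▸ hlp) ha
  rw [mem_inter] at hc ⊢
  exact ⟨hB.2 ▸ mem_image_of_mem σ hc.1, hC.2 ▸ mem_image_of_mem σ hc.2⟩

theorem card_fixedBlocks_through_le_one (hσ : σ ^ p ^ n = 1)
    (hinter : ∀ B ∈ 𝓑, ∀ C ∈ 𝓑, B ≠ C → #(B ∩ C) = l) (hlp : l < p)
    {y : P} (hy : σ y ≠ y) : #{b ∈ fixedBlocks 𝓑 σ | y ∈ b} ≤ 1 := by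
  refine card_le_one.2 fun B hB C hC => ?_
  by_contra hBC
  rw [mem_filter] at hB hC
  exact hy (apply_eq_of_mem_inter hσ hinter hlp hB.1 hC.1 hBC (mem_inter.2 ⟨hB.2, hC.2⟩))

theorem filter_fixedBlocks_mem_mem (hσ : σ ^ p ^ n = 1) (h𝓑σ : ∀ b ∈ 𝓑, b.image σ ∈ 𝓑)
    (hpair : ∀ x y : P, x ≠ y → #{b ∈ 𝓑 | x ∈ b ∧ y ∈ b} = l) (hlp : l < p)
    {x y : P} (hx : σ x = x) (hy : σ y = y) (hxy : x ≠ y) :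
    {b ∈ fixedBlocks 𝓑 σ | x ∈ b ∧ y ∈ b} = {b ∈ 𝓑 | x ∈ b ∧ y ∈ b} := by
  ext b
  simp only [mem_filter, mem_fixedBlocks]
  constructor
  · rintro ⟨⟨hb, -⟩, hxyb⟩
    exact ⟨hb, hxyb⟩
  · rintro ⟨hb, hxb, hyb⟩
    exact ⟨⟨hb, image_eq_of_mem_of_mem hσ h𝓑σ hpair hlp hx hy hxy hb hxb hyb⟩, hxb, hyb⟩

theorem card_offDiag_fixedBlocks_through_mul [Fintype P] (hσ : σ ^ p ^ n = 1)
    (h𝓑σ : ∀ b ∈ 𝓑, b.image σ ∈ 𝓑)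
    (hpair : ∀ x y : P, x ≠ y → #{b ∈ 𝓑 | x ∈ b ∧ y ∈ b} = l)
    (hinter : ∀ B ∈ 𝓑, ∀ C ∈ 𝓑, B ≠ C → #(B ∩ C) = l) (hlp : l < p) {x : P} (hx : σ x = x) :
    #{b ∈ fixedBlocks 𝓑 σ | x ∈ b}.offDiag * (l - 1) = (#{y | σ y = y} - 1) * (l * l - l) := by
  set Sx := {b ∈ fixedBlocks 𝓑 σ | x ∈ b}
  have h : ∑ BC ∈ Sx.offDiag, #{y ∈ univ.erase x | y ∈ BC.1 ∧ y ∈ BC.2}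
      = ∑ y ∈ univ.erase x, #{BC ∈ Sx.offDiag | y ∈ BC.1 ∧ y ∈ BC.2} :=
    sum_card_bipartiteAbove_eq_sum_card_bipartiteBelow _
  have hleft : ∀ BC ∈ Sx.offDiag, #{y ∈ univ.erase x | y ∈ BC.1 ∧ y ∈ BC.2} = l - 1 := by
    rintro ⟨B, C⟩ hBC
    simp only [Sx, mem_offDiag, mem_filter, mem_fixedBlocks] at hBC
    obtain ⟨⟨⟨hB, -⟩, hxB⟩, ⟨⟨hC, -⟩, hxC⟩, hBC⟩ := hBC
    have hBCx : {y ∈ univ.erase x | y ∈ B ∧ y ∈ C} = (B ∩ C).erase x := by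
      ext; simp [and_comm]
    rw [hBCx, card_erase_of_mem (mem_inter.2 ⟨hxB, hxC⟩), hinter B hB C hC hBC]
  -- a non-fixed point lies on at most one fixed block
  have hright : ∀ y ∈ univ.erase x, #{BC ∈ Sx.offDiag | y ∈ BC.1 ∧ y ∈ BC.2}
      = if σ y = y then l * l - l else 0 := by
    intro y hy
    have hyx := ne_of_mem_erase hy
    rw [← offDiag_filter Sx (y ∈ ·), offDiag_card, filter_filter]
    split_ifs with hfy
    · rw [filter_fixedBlocks_mem_mem hσ h𝓑σ hpair hlp hx hfy hyx.symm, hpair x y hyx.symm]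
    · have hle : #{b ∈ fixedBlocks 𝓑 σ | x ∈ b ∧ y ∈ b} ≤ 1 :=
        (card_le_card fun b hb => mem_filter.2 ⟨(mem_filter.1 hb).1, (mem_filter.1 hb).2.2⟩).trans
          (card_fixedBlocks_through_le_one hσ hinter hlp hfy)
      obtain h0 | h1 := Nat.le_one_iff_eq_zero_or_eq_one.1 hle <;> simp [*]
  rw [sum_congr rfl hleft, sum_congr rfl hright, sum_const, smul_eq_mul, sum_ite,
    sum_const_zero, add_zero, sum_const, smul_eq_mul, filter_erase,
    card_erase_of_mem (s := {y | σ y = y}) (by simpa using hx)] at h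
  exact h

theorem mul_card_fixedPoints_add_le [Fintype P] (hσ : σ ^ p ^ n = 1)
    (h𝓑σ : ∀ b ∈ 𝓑, b.image σ ∈ 𝓑) (hk : ∀ b ∈ 𝓑, #b = k)
    (hpair : ∀ x y : P, x ≠ y → #{b ∈ 𝓑 | x ∈ b ∧ y ∈ b} = l) (hlp : l < p)
    {y : P} (hy : σ y ≠ y) :
    l * #{x | σ x = x} + #{b ∈ fixedBlocks 𝓑 σ | y ∈ b}
      ≤ #{b ∈ 𝓑 | y ∈ b} + #{b ∈ fixedBlocks 𝓑 σ | y ∈ b} * k := by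
  set F : Finset P := {x | σ x = x}
  have h : ∑ x ∈ F, #{b ∈ {b ∈ 𝓑 | y ∈ b} | x ∈ b} = ∑ b ∈ {b ∈ 𝓑 | y ∈ b}, #{x ∈ F | x ∈ b} :=
    sum_card_bipartiteAbove_eq_sum_card_bipartiteBelow _
  have hleft : ∀ x ∈ F, #{b ∈ {b ∈ 𝓑 | y ∈ b} | x ∈ b} = l := by
    intro x hx
    rw [filter_filter]
    exact hpair y x fun hyx => hy (hyx ▸ (mem_filter.1 hx).2)
  -- a non-fixed block contains at most one fixed point
  have hterm : ∀ b ∈ {b ∈ 𝓑 | y ∈ b}, #{x ∈ F | x ∈ b} + (if b.image σ = b then 1 else 0)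
      ≤ 1 + (if b.image σ = b then 1 else 0) * k := by
    intro b hb
    rw [mem_filter] at hb
    split_ifs with hbσ
    · have := card_le_card (s := {x ∈ F | x ∈ b}) fun x hx => (mem_filter.1 hx).2
      rw [hk b hb.1] at this
      omega
    · have : #{x ∈ F | x ∈ b} ≤ 1 := by
        refine card_le_one.2 fun x hx z hz => ?_
        by_contra hxz
        simp only [F, mem_filter, mem_univ, true_and] at hx hz
        exact hbσ (image_eq_of_mem_of_mem hσ h𝓑σ hpair hlp hx.1 hz.1 hxz hb.1 hx.2 hz.2)
      omega
  have hsum := sum_le_sum hterm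
  rw [sum_add_distrib, sum_add_distrib, ← h, sum_congr rfl hleft, ← sum_mul, sum_boole,
    sum_const, sum_const, smul_eq_mul, smul_eq_mul, mul_one] at hsum
  rw [fixedBlocks, filter_comm]
  simpa [mul_comm] using hsum

theorem sum_card_fixedBlocks_through [Fintype P] (hk : ∀ b ∈ 𝓑, #b = k) :
    ∑ y, #{b ∈ fixedBlocks 𝓑 σ | y ∈ b} = #(fixedBlocks 𝓑 σ) * k := by
  have h : ∑ y, #{b ∈ fixedBlocks 𝓑 σ | y ∈ b} = ∑ b ∈ fixedBlocks 𝓑 σ, #{y ∈ univ | y ∈ b} :=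
    sum_card_bipartiteAbove_eq_sum_card_bipartiteBelow _
  rw [h, sum_congr rfl fun b hb => by
    rw [filter_mem_eq_inter, univ_inter, hk b (mem_filter.1 hb).1], sum_const, smul_eq_mul]

end Automorphism

section Biplane

open Equiv Perm

variable {P : Type*} [Fintype P] [DecidableEq P] {𝓑 : Finset (Finset P)} {σ : Perm P} {n : ℕ}

theorem card_fixedPoints_le_twelve (hk : ∀ b ∈ 𝓑, #b = 13)
    (hr : ∀ x : P, #{b ∈ 𝓑 | x ∈ b} = 13)
    (hpair : ∀ x y : P, x ≠ y → #{b ∈ 𝓑 | x ∈ b ∧ y ∈ b} = 2)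
    (hinter : ∀ B ∈ 𝓑, ∀ C ∈ 𝓑, B ≠ C → #(B ∩ C) = 2) (h𝓑σ : ∀ b ∈ 𝓑, b.image σ ∈ 𝓑)
    (hσ : σ ^ 3 ^ n = 1) {y : P} (hy : σ y ≠ y) : #{x | σ x = x} ≤ 12 := by
  have h := mul_card_fixedPoints_add_le hσ h𝓑σ hk hpair (by norm_num) hy
  have hle := card_fixedBlocks_through_le_one hσ hinter (by norm_num) hy
  rw [hr] at h
  omega

theorem card_fixedBlocks_through_eq (hr : ∀ x : P, #{b ∈ 𝓑 | x ∈ b} = 13)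
    (hpair : ∀ x y : P, x ≠ y → #{b ∈ 𝓑 | x ∈ b ∧ y ∈ b} = 2)
    (hinter : ∀ B ∈ 𝓑, ∀ C ∈ 𝓑, B ≠ C → #(B ∩ C) = 2) (h𝓑σ : ∀ b ∈ 𝓑, b.image σ ∈ 𝓑)
    (hσ : σ ^ 3 ^ n = 1) {x : P} (hx : σ x = x) (hf : #{x | σ x = x} ≤ 12) :
    (#{b ∈ fixedBlocks 𝓑 σ | x ∈ b} = 1 ∧ #{x | σ x = x} = 1) ∨
      (#{b ∈ fixedBlocks 𝓑 σ | x ∈ b} = 4 ∧ #{x | σ x = x} = 7) := by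
  have hmod := card_fixedBlocks_through_modEq hσ h𝓑σ hx
  have hcount := card_offDiag_fixedBlocks_through_mul hσ h𝓑σ hpair hinter (by norm_num) hx
  have hle : #{b ∈ fixedBlocks 𝓑 σ | x ∈ b} ≤ 13 :=
    hr x ▸ card_le_card (filter_subset_filter _ (filter_subset _ _))
  rw [hr, Nat.ModEq] at hmod
  rw [offDiag_card] at hcount
  have hpos : 0 < #{x | σ x = x} := card_pos.2 ⟨x, mem_filter.2 ⟨mem_univ x, hx⟩⟩
  generalize #{b ∈ fixedBlocks 𝓑 σ | x ∈ b} = c at hmod hcount hle ⊢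
  interval_cases c <;> omega

theorem card_fixedPoints_eq_one (hv : Fintype.card P = 79) (hk : ∀ b ∈ 𝓑, #b = 13)
    (hr : ∀ x : P, #{b ∈ 𝓑 | x ∈ b} = 13)
    (hpair : ∀ x y : P, x ≠ y → #{b ∈ 𝓑 | x ∈ b ∧ y ∈ b} = 2)
    (hinter : ∀ B ∈ 𝓑, ∀ C ∈ 𝓑, B ≠ C → #(B ∩ C) = 2) (h𝓑σ : ∀ b ∈ 𝓑, b.image σ ∈ 𝓑)
    (hσ : σ ^ 3 ^ n = 1) (hne : σ ≠ 1) : #{x | σ x = x} = 1 := by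
  have hmod := card_modEq_card_filter_apply_eq hσ (S := univ) fun a _ => mem_univ (σ a)
  rw [card_univ, hv, Nat.ModEq] at hmod
  obtain ⟨x, hx⟩ : ∃ x, σ x = x := by
    obtain ⟨x, hx⟩ := card_pos.1 (show 0 < #{x | σ x = x} by omega)
    exact ⟨x, (mem_filter.1 hx).2⟩
  obtain ⟨y, hy⟩ : ∃ y, σ y ≠ y := by
    by_contra! h
    exact hne (Equiv.ext h)
  have hf := card_fixedPoints_le_twelve hk hr hpair hinter h𝓑σ hσ hy
  rcases card_fixedBlocks_through_eq hr hpair hinter h𝓑σ hσ hx hf with ⟨-, h1⟩ | ⟨-, h7⟩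
  · exact h1
  exfalso
  -- the fixed blocks would have `7 * 4 + 72 * 1 = 100` points in all, not a multiple of 13
  have hfixed : ∀ x, σ x = x → #{b ∈ fixedBlocks 𝓑 σ | x ∈ b} = 4 := fun x hx => by
    have := card_fixedBlocks_through_eq hr hpair hinter h𝓑σ hσ hx hf
    omega
  have hnonfixed : ∀ y, σ y ≠ y → #{b ∈ fixedBlocks 𝓑 σ | y ∈ b} = 1 := fun y hy => by
    have h := mul_card_fixedPoints_add_le hσ h𝓑σ hk hpair (by norm_num) hy
    have hle := card_fixedBlocks_through_le_one hσ hinter (by norm_num) hy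
    rw [hr] at h
    omega
  have hsum := sum_card_fixedBlocks_through (σ := σ) hk
  rw [← sum_filter_add_sum_filter_not univ fun y => σ y = y,
    sum_congr rfl fun y hy => hfixed y (mem_filter.1 hy).2,
    sum_congr rfl fun y hy => hnonfixed y (mem_filter.1 hy).2, sum_const, sum_const,
    smul_eq_mul, smul_eq_mul, filter_not, card_sdiff_of_subset (filter_subset _ _), card_univ,
    hv, h7] at hsum
  omega

end Biplane

/-- If D is a biplane with parameters (79,13,2) and x is a nontrivial
automorphism of 3-power order, then x fixes exactly one point and exactly
one block. -/
theorem stmt_11 {P : Type*} [Fintype P] [DecidableEq P]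
    (hv : Fintype.card P = 79)
    (𝓑 : Finset (Finset P)) (hcard : 𝓑.card = 79)
    (hk : ∀ b ∈ 𝓑, b.card = 13)
    (hpair : ∀ p q : P, p ≠ q →
      (𝓑.filter (fun b => p ∈ b ∧ q ∈ b)).card = 2)
    (σ : Equiv.Perm P) (hσ : ∀ b ∈ 𝓑, b.image σ ∈ 𝓑)
    (hne : σ ≠ 1) (hord : ∃ m : ℕ, orderOf σ = 3 ^ m) :
    (Finset.univ.filter (fun p => σ p = p)).card = 1 ∧
    (𝓑.filter (fun b => b.image σ = b)).card = 1 := by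
  obtain ⟨m, hm⟩ := hord
  have hσ3 : σ ^ 3 ^ m = 1 := hm ▸ pow_orderOf_eq_one σ
  have hr : ∀ x, #{b ∈ 𝓑 | x ∈ b} = 13 := fun x => by
    have := card_blocks_through_mul hk hpair x
    omega
  have hinter : ∀ B ∈ 𝓑, ∀ C ∈ 𝓑, B ≠ C → #(B ∩ C) = 2 := fun B hB C hC hBC =>
    card_inter_eq_of_symmetric hk hpair (hcard.trans hv.symm) hr hB hC hBC
  have hf := card_fixedPoints_eq_one hv hk hr hpair hinter hσ hσ3 hne
  refine ⟨hf, ?_⟩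
  have hmod : #𝓑 ≡ #(fixedBlocks 𝓑 σ) [MOD 3] := card_modEq_card_filter_image_eq hσ3 hσ
  rw [hcard, Nat.ModEq] at hmod
  -- two fixed blocks would meet in two fixed points
  have hle : #(fixedBlocks 𝓑 σ) ≤ 1 := by
    refine card_le_one.2 fun B hB C hC => ?_
    by_contra hBC
    have hsub : B ∩ C ⊆ ({x | σ x = x} : Finset P) := fun a ha =>
      mem_filter.2 ⟨mem_univ a, apply_eq_of_mem_inter hσ3 hinter (by norm_num) hB hC hBC ha⟩
    have := card_le_card hsub
    rw [hinter B (mem_fixedBlocks.1 hB).1 C (mem_fixedBlocks.1 hC).1 hBC] at this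
    omega
  change #(fixedBlocks 𝓑 σ) = 1
  omega
end

section
/- If G is a nontrivial 3-group of automorphisms of a biplane with parameters (79,13,2), then |G| = 3. -/
open Finset


lemma swap_count {α β : Type*} (s : Finset α) (t : Finset β) (r : α → β → Prop)
    [∀ a b, Decidable (r a b)] :
    ∑ a ∈ s, (t.filter (fun b => r a b)).card
      = ∑ b ∈ t, (s.filter (fun a => r a b)).card := by
  simp_rw [Finset.card_filter]
  exact Finset.sum_comm

lemma two_set {α : Type*} [DecidableEq α] (g : α → α) (s : Finset α) (h2 : s.card = 2)
    (hmap : ∀ x ∈ s, g x ∈ s) (h3 : ∀ x ∈ s, g (g (g x)) = x) :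
    ∀ x ∈ s, g x = x := by
  have main : ∀ u v : α, u ≠ v → (∀ x ∈ ({u, v} : Finset α), g x ∈ ({u, v} : Finset α)) →
      (∀ x ∈ ({u, v} : Finset α), g (g (g x)) = x) → g u = u := by
    intro u v huv hm h3'
    have hu : u ∈ ({u, v} : Finset α) := by simp
    have hv : v ∈ ({u, v} : Finset α) := by simp
    have hgu := hm u hu
    simp only [mem_insert, mem_singleton] at hgu
    rcases hgu with h | h
    · exact h
    · exfalso
      have hgv := hm v hv
      simp only [mem_insert, mem_singleton] at hgv
      have h3u := h3' u hu
      rcases hgv with h' | h'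
      · rw [h, h', h] at h3u; exact huv h3u.symm
      · rw [h, h', h'] at h3u; exact huv h3u.symm
  obtain ⟨a, b, hab, rfl⟩ := Finset.card_eq_two.mp h2
  intro x hx
  simp only [mem_insert, mem_singleton] at hx
  rcases hx with rfl | rfl
  · exact main x b hab hmap h3
  · refine main x a (Ne.symm hab) ?_ ?_ <;> rw [Finset.pair_comm x a]
    · exact hmap
    · exact h3

lemma tricky {α : Type*} [DecidableEq α] (g : α → α) (t : Finset α)
    (hmap : ∀ x ∈ t, g x ∈ t) (h3 : ∀ x ∈ t, g (g (g x)) = x)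
    (hnf : ∀ x ∈ t, g x ≠ x) : 3 ∣ t.card := by
  induction t using Finset.strongInduction with
  | _ t ih =>
    rcases t.eq_empty_or_nonempty with rfl | ⟨x, hx⟩
    · simp
    · have hgx := hmap x hx
      have hggx := hmap _ hgx
      have h1 : g x ≠ x := hnf x hx
      have h2 : g (g x) ≠ g x := hnf _ hgx
      have h3x := h3 x hx
      have h4 : g (g x) ≠ x := by
        intro h
        have hc := congrArg g h
        rw [h3x] at hc
        exact h1 hc.symm
      set s : Finset α := {x, g x, g (g x)} with hs
      have hsub : s ⊆ t := by
        intro y hy; simp only [hs, mem_insert, mem_singleton] at hy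
        rcases hy with rfl | rfl | rfl <;> assumption
      have hscard : s.card = 3 := by
        rw [hs, Finset.card_insert_of_notMem (by simp [h1.symm, h4.symm]),
          Finset.card_insert_of_notMem (by simp [h2.symm]), Finset.card_singleton]
      have hss : t \ s ⊂ t := by
        apply Finset.sdiff_ssubset hsub; exact ⟨x, by simp [hs]⟩
      have hmem : ∀ y ∈ t \ s, g y ∈ t \ s := by
        intro y hy
        have hyt := (Finset.mem_sdiff.mp hy).1
        have hys := (Finset.mem_sdiff.mp hy).2
        refine Finset.mem_sdiff.mpr ⟨hmap y hyt, ?_⟩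
        simp only [hs, mem_insert, mem_singleton] at hys ⊢
        push_neg at hys ⊢
        have h3y := h3 y hyt
        refine ⟨?_, ?_, ?_⟩
        · intro h; exact hys.2.2 (by rw [← h3y, h])
        · intro h; exact hys.1 (by rw [← h3y, h, h3x])
        · intro h
          have := h3 (g x) hgx
          exact hys.2.1 (by rw [← h3y, h]; exact this)
      have hdvd := ih (t \ s) hss hmem
        (fun y hy => h3 y (Finset.mem_sdiff.mp hy).1)
        (fun y hy => hnf y (Finset.mem_sdiff.mp hy).1)
      have hc : (t \ s).card = t.card - 3 := by rw [Finset.card_sdiff_of_subset hsub, hscard]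
      have hle : 3 ≤ t.card := hscard ▸ Finset.card_le_card hsub
      omega


lemma cube_power {H : Type*} [Group H] (g : H) (hg : g ≠ 1) {k : ℕ} (h : g ^ (3 ^ k) = 1) :
    ∃ n : ℕ, g ^ n ≠ 1 ∧ (g ^ n) ^ 3 = 1 := by
  induction k with
  | zero => simp at h; exact absurd h hg
  | succ k ih =>
    by_cases hk : g ^ (3 ^ k) = 1
    · exact ih hk
    · exact ⟨3 ^ k, hk, by rw [← pow_mul, ← pow_succ]; exact h⟩

lemma fixed_pow {P : Type*} (σ : Equiv.Perm P) (x : P) (h : σ x = x) (n : ℕ) :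
    (σ ^ n) x = x := by
  induction n with
  | zero => simp
  | succ n ih => rw [pow_succ, Equiv.Perm.mul_apply, h, ih]

lemma free_partition {P : Type*} [Fintype P] [DecidableEq P]
    (G : Subgroup (Equiv.Perm P)) [Fintype G] (S : Finset P)
    (hclosed : ∀ σ ∈ G, ∀ x ∈ S, σ x ∈ S)
    (hfree : ∀ σ ∈ G, ∀ x ∈ S, σ x = x → σ = 1) :
    Fintype.card G ∣ S.card := by
  induction S using Finset.strongInduction with
  | _ S ih =>
    rcases S.eq_empty_or_nonempty with rfl | ⟨x, hx⟩
    · simp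
    · set O : Finset P := (Finset.univ : Finset G).image (fun g : G => (g : Equiv.Perm P) x)
        with hO
      have hOS : O ⊆ S := by
        intro y hy
        simp only [hO, Finset.mem_image, Finset.mem_univ, true_and] at hy
        obtain ⟨g, rfl⟩ := hy
        exact hclosed _ g.2 x hx
      have hxO : x ∈ O := by
        simp only [hO, Finset.mem_image, Finset.mem_univ, true_and]
        exact ⟨1, by simp⟩
      have hcO : O.card = Fintype.card G := by
        rw [hO, Finset.card_image_of_injective _ ?_, Finset.card_univ]
        intro g h hgh
        have : ((h⁻¹ * g : G) : Equiv.Perm P) x = x := by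
          show ((h : Equiv.Perm P)⁻¹ * (g : Equiv.Perm P)) x = x
          have hgh' : (g : Equiv.Perm P) x = (h : Equiv.Perm P) x := hgh
          rw [Equiv.Perm.mul_apply, hgh']
          simp
        have h1 : ((h⁻¹ * g : G) : Equiv.Perm P) = 1 := hfree _ (h⁻¹ * g).2 x hx this
        have : (h⁻¹ * g : G) = 1 := by exact_mod_cast Subtype.ext h1
        rw [mul_eq_one_iff_inv_eq] at this
        simpa using this.symm
      have hss : S \ O ⊂ S := Finset.sdiff_ssubset hOS ⟨x, hxO⟩
      have hclosed' : ∀ σ ∈ G, ∀ y ∈ S \ O, σ y ∈ S \ O := by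
        intro σ hσ y hy
        obtain ⟨hyS, hyO⟩ := Finset.mem_sdiff.mp hy
        refine Finset.mem_sdiff.mpr ⟨hclosed σ hσ y hyS, ?_⟩
        intro hmem
        apply hyO
        simp only [hO, Finset.mem_image, Finset.mem_univ, true_and] at hmem ⊢
        obtain ⟨g, hg⟩ := hmem
        refine ⟨⟨σ, hσ⟩⁻¹ * g, ?_⟩
        have hg' : (g : Equiv.Perm P) x = σ y := hg
        show (σ⁻¹ * (g : Equiv.Perm P)) x = y
        rw [Equiv.Perm.mul_apply, hg']
        simp
      have hdvd := ih (S \ O) hss hclosed' (fun σ hσ y hy => hfree σ hσ y (Finset.mem_sdiff.mp hy).1)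
      have hc : (S \ O).card = S.card - O.card := Finset.card_sdiff_of_subset hOS
      have hle : O.card ≤ S.card := Finset.card_le_card hOS
      rw [hcO] at hc
      obtain ⟨m, hm⟩ := hdvd
      exact ⟨m + 1, by rw [Nat.mul_add, mul_one, ← hm]; omega⟩


section Design

variable {P : Type*} [Fintype P] [DecidableEq P]
    (hv : Fintype.card P = 79)
    (𝓑 : Finset (Finset P)) (hcard : 𝓑.card = 79)
    (hk : ∀ b ∈ 𝓑, b.card = 13)
    (hpair : ∀ p q : P, p ≠ q →
      (𝓑.filter (fun b => p ∈ b ∧ q ∈ b)).card = 2)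

include hv hk hpair in
lemma r13 (p : P) : (𝓑.filter (fun b => p ∈ b)).card = 13 := by
  have h1 : ∑ q ∈ univ.erase p, (𝓑.filter (fun b => p ∈ b ∧ q ∈ b)).card = 156 := by
    rw [Finset.sum_congr rfl fun q hq => hpair p q (Finset.ne_of_mem_erase hq).symm,
      Finset.sum_const, Finset.card_erase_of_mem (Finset.mem_univ p), Finset.card_univ, hv]
    rfl
  have h2 := swap_count (univ.erase p) 𝓑 (fun q b => p ∈ b ∧ q ∈ b)
  rw [h1] at h2
  have h3 : ∀ b ∈ 𝓑, ((univ.erase p).filter (fun q => p ∈ b ∧ q ∈ b)).card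
      = if p ∈ b then 12 else 0 := by
    intro b hb
    by_cases hpb : p ∈ b
    · rw [if_pos hpb]
      have he : (univ.erase p).filter (fun q => p ∈ b ∧ q ∈ b) = b.erase p := by
        ext q
        simp only [Finset.mem_filter, Finset.mem_erase, Finset.mem_univ, true_and]
        tauto
      rw [he, Finset.card_erase_of_mem hpb, hk b hb]
    · rw [if_neg hpb]
      simp [Finset.filter_eq_empty_iff, hpb]
  rw [Finset.sum_congr rfl h3, ← Finset.sum_filter, Finset.sum_const, smul_eq_mul] at h2
  omega

include hv hcard hk hpair in
lemma meet2 : ∀ b1 ∈ 𝓑, ∀ b2 ∈ 𝓑, b1 ≠ b2 → (b1 ∩ b2).card = 2 := by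
  intro b1 hb1 b2 hb2 hne
  set E := 𝓑.erase b1 with hE
  have hEcard : E.card = 78 := by rw [hE, Finset.card_erase_of_mem hb1, hcard]
  have hinter : ∀ b : Finset P, b1 ∩ b = b1.filter (fun q => q ∈ b) := by
    intro b; ext q; simp [Finset.mem_inter, Finset.mem_filter]
  -- S1
  have S1 : ∑ b ∈ E, (b1 ∩ b).card = 156 := by
    simp_rw [hinter]
    rw [swap_count E b1 (fun b q => q ∈ b)]
    have inner : ∀ q ∈ b1, (E.filter (fun b => q ∈ b)).card = 12 := by
      intro q hq
      have he : E.filter (fun b => q ∈ b) = (𝓑.filter (fun b => q ∈ b)).erase b1 := by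
        ext b
        simp only [hE, Finset.mem_filter, Finset.mem_erase]
        tauto
      rw [he, Finset.card_erase_of_mem (Finset.mem_filter.mpr ⟨hb1, hq⟩),
        r13 hv 𝓑 hk hpair q]
    rw [Finset.sum_congr rfl inner, Finset.sum_const, hk b1 hb1, smul_eq_mul]
  -- S2
  have S2 : ∑ b ∈ E, ((b1 ∩ b).offDiag).card = 156 := by
    have hod : ∀ b : Finset P, (b1 ∩ b).offDiag
        = b1.offDiag.filter (fun z => z.1 ∈ b ∧ z.2 ∈ b) := by
      intro b; ext ⟨x, y⟩
      simp only [Finset.mem_offDiag, Finset.mem_inter, Finset.mem_filter]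
      tauto
    simp_rw [hod]
    rw [swap_count E b1.offDiag (fun b z => z.1 ∈ b ∧ z.2 ∈ b)]
    have inner : ∀ z ∈ b1.offDiag, (E.filter (fun b => z.1 ∈ b ∧ z.2 ∈ b)).card = 1 := by
      rintro ⟨x, y⟩ hz
      rw [Finset.mem_offDiag] at hz
      have he : E.filter (fun b => x ∈ b ∧ y ∈ b)
          = (𝓑.filter (fun b => x ∈ b ∧ y ∈ b)).erase b1 := by
        ext b
        simp only [hE, Finset.mem_filter, Finset.mem_erase]
        tauto
      rw [he, Finset.card_erase_of_mem (Finset.mem_filter.mpr ⟨hb1, hz.1, hz.2.1⟩),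
        hpair x y hz.2.2]
    rw [Finset.sum_congr rfl inner, Finset.sum_const, Finset.offDiag_card, hk b1 hb1,
      smul_eq_mul]
  -- cast to ℤ
  have hA : ∑ b ∈ E, ((b1 ∩ b).card : ℤ) = 156 := by exact_mod_cast S1
  have hB : ∑ b ∈ E, ((b1 ∩ b).card : ℤ) ^ 2 = 312 := by
    have hcast : ∀ b ∈ E, (((b1 ∩ b).offDiag.card : ℤ))
        = ((b1 ∩ b).card : ℤ) ^ 2 - ((b1 ∩ b).card : ℤ) := by
      intro b _
      have hle : (b1 ∩ b).card ≤ (b1 ∩ b).card * (b1 ∩ b).card := by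
        rcases Nat.eq_zero_or_pos (b1 ∩ b).card with h | h
        · omega
        · exact Nat.le_mul_of_pos_left _ h
      rw [Finset.offDiag_card, Nat.cast_sub hle]
      push_cast
      ring
    have hS2' : ∑ b ∈ E, (((b1 ∩ b).offDiag.card : ℤ)) = 156 := by exact_mod_cast S2
    rw [Finset.sum_congr rfl hcast, Finset.sum_sub_distrib, hA] at hS2'
    linarith
  have key : ∑ b ∈ E, (((b1 ∩ b).card : ℤ) - 2) ^ 2 = 0 := by
    have hexp : ∀ b ∈ E, (((b1 ∩ b).card : ℤ) - 2) ^ 2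
        = ((b1 ∩ b).card : ℤ) ^ 2 - 4 * ((b1 ∩ b).card : ℤ) + 4 := fun b _ => by ring
    rw [Finset.sum_congr rfl hexp, Finset.sum_add_distrib, Finset.sum_sub_distrib, hB,
      ← Finset.mul_sum, hA, Finset.sum_const, hEcard]
    norm_num
  have hb2E : b2 ∈ E := Finset.mem_erase.mpr ⟨hne.symm, hb2⟩
  have hzero := (Finset.sum_eq_zero_iff_of_nonneg (fun b _ => sq_nonneg _)).mp key b2 hb2E
  have : ((b1 ∩ b2).card : ℤ) = 2 := by
    have := pow_eq_zero_iff (n := 2) (by norm_num) |>.mp hzero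
    linarith [this]
  exact_mod_cast this

end Design


section Core
variable {P : Type*} [Fintype P] [DecidableEq P]
    (hv : Fintype.card P = 79)
    (𝓑 : Finset (Finset P)) (hcard : 𝓑.card = 79)
    (hk : ∀ b ∈ 𝓑, b.card = 13)
    (hpair : ∀ p q : P, p ≠ q →
      (𝓑.filter (fun b => p ∈ b ∧ q ∈ b)).card = 2)

include hv hcard hk hpair in
lemma fix_unique (σ : Equiv.Perm P) (hσ3 : σ ^ 3 = 1) (hσ1 : σ ≠ 1)
    (hσB : ∀ b ∈ 𝓑, b.image ⇑σ ∈ 𝓑) :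
    (Finset.univ.filter (fun p => σ p = p)).card = 1 := by
  set F := Finset.univ.filter (fun p => σ p = p) with hF
  set f := F.card with hf
  have hσσσ : ∀ x, σ (σ (σ x)) = x := by
    intro x
    have h : (σ ^ 3) x = x := by rw [hσ3]; rfl
    simpa [pow_succ, Equiv.Perm.mul_apply] using h
  have hmem_of_fix : ∀ {b : Finset P}, b.image ⇑σ = b → ∀ {x}, x ∈ b → σ x ∈ b := by
    intro b hb x hx
    exact hb ▸ Finset.mem_image_of_mem _ hx
  have himg3 : ∀ b : Finset P, ((b.image ⇑σ).image ⇑σ).image ⇑σ = b := by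
    intro b
    rw [Finset.image_image, Finset.image_image]
    exact (Finset.image_congr (fun x _ => hσσσ x)).trans Finset.image_id
  have hsplitP : f + (Finset.univ.filter (fun p => ¬ σ p = p)).card = 79 := by
    have h := Finset.card_filter_add_card_filter_not
      (s := (Finset.univ : Finset P)) (p := fun p => σ p = p)
    simpa [Finset.card_univ, hv] using h
  -- f ≡ 1 mod 3
  have hmod_univ : f % 3 = 1 := by
    have ht : 3 ∣ (Finset.univ.filter (fun p => ¬ σ p = p)).card := by
      apply tricky σ
      · intro x hx
        simp only [Finset.mem_filter, Finset.mem_univ, true_and] at hx ⊢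
        intro h
        exact hx (σ.injective h)
      · exact fun x _ => hσσσ x
      · intro x hx
        simpa using (Finset.mem_filter.mp hx).2
    omega
  have hmodb : ∀ b ∈ 𝓑, b.image ⇑σ = b → (b.filter (fun p => σ p = p)).card % 3 = 1 := by
    intro b hb hfixb
    have ht : 3 ∣ (b.filter (fun p => ¬ σ p = p)).card := by
      apply tricky σ
      · intro x hx
        simp only [Finset.mem_filter] at hx ⊢
        exact ⟨hmem_of_fix hfixb hx.1, fun h => hx.2 (σ.injective h)⟩
      · exact fun x _ => hσσσ x
      · intro x hx
        simpa using (Finset.mem_filter.mp hx).2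
    have hsplit : (b.filter (fun p => σ p = p)).card
        + (b.filter (fun p => ¬ σ p = p)).card = 13 := by
      have h := Finset.card_filter_add_card_filter_not
        (s := b) (p := fun p => σ p = p)
      simpa [hk b hb] using h
    omega
  -- both blocks through two fixed points are fixed
  have hpairfix : ∀ p q : P, σ p = p → σ q = q → p ≠ q →
      ∀ b ∈ 𝓑, p ∈ b → q ∈ b → b.image ⇑σ = b := by
    intro p q hp hq hpq b hb hpb hqb
    have hT2 : (𝓑.filter (fun c => p ∈ c ∧ q ∈ c)).card = 2 := hpair p q hpq
    have hmapT : ∀ c ∈ 𝓑.filter (fun c => p ∈ c ∧ q ∈ c),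
        c.image ⇑σ ∈ 𝓑.filter (fun c => p ∈ c ∧ q ∈ c) := by
      intro c hc
      obtain ⟨hc𝓑, hpc, hqc⟩ := Finset.mem_filter.mp hc
      refine Finset.mem_filter.mpr ⟨hσB c hc𝓑, ?_, ?_⟩
      · exact Finset.mem_image.mpr ⟨p, hpc, hp⟩
      · exact Finset.mem_image.mpr ⟨q, hqc, hq⟩
    exact two_set _ _ hT2 hmapT (fun c _ => himg3 c) b
      (Finset.mem_filter.mpr ⟨hb, hpb, hqb⟩)
  -- intersection points of two distinct fixed blocks are fixed
  have hinterfix : ∀ b1 ∈ 𝓑, ∀ b2 ∈ 𝓑, b1 ≠ b2 → b1.image ⇑σ = b1 → b2.image ⇑σ = b2 →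
      ∀ x ∈ b1 ∩ b2, σ x = x := by
    intro b1 hb1 b2 hb2 hne hf1 hf2
    apply two_set σ (b1 ∩ b2) (meet2 hv 𝓑 hcard hk hpair b1 hb1 b2 hb2 hne)
    · intro x hx
      obtain ⟨h1, h2⟩ := Finset.mem_inter.mp hx
      exact Finset.mem_inter.mpr ⟨hmem_of_fix hf1 h1, hmem_of_fix hf2 h2⟩
    · exact fun x _ => hσσσ x
  -- a non-fixed block contains at most one fixed point
  have hnfblock : ∀ b ∈ 𝓑, b.image ⇑σ ≠ b → (b.filter (fun p => σ p = p)).card ≤ 1 := by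
    intro b hb hnfix
    by_contra hgt
    push_neg at hgt
    obtain ⟨p, hp, q, hq, hpq⟩ := Finset.one_lt_card.mp hgt
    obtain ⟨hpb, hpfix⟩ := Finset.mem_filter.mp hp
    obtain ⟨hqb, hqfix⟩ := Finset.mem_filter.mp hq
    exact hnfix (hpairfix p q hpfix hqfix hpq b hb hpb hqb)
  -- a non-fixed point lies on at most one fixed block
  have hnfpoint : ∀ q : P, ¬ σ q = q → ∀ b1 ∈ 𝓑, ∀ b2 ∈ 𝓑,
      b1.image ⇑σ = b1 → b2.image ⇑σ = b2 → q ∈ b1 → q ∈ b2 → b1 = b2 := by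
    intro q hq b1 hb1 b2 hb2 hf1 hf2 hq1 hq2
    by_contra hne
    exact hq (hinterfix b1 hb1 b2 hb2 hne hf1 hf2 q (Finset.mem_inter.mpr ⟨hq1, hq2⟩))
  -- key sum identity for a non-fixed point
  have hkey : ∀ q : P, ¬ σ q = q →
      ∑ b ∈ 𝓑.filter (fun b => q ∈ b), (b.filter (fun p => σ p = p)).card = 2 * f := by
    intro q hq
    have h1 : ∑ p ∈ F, (𝓑.filter (fun b => p ∈ b ∧ q ∈ b)).card = 2 * f := by
      rw [Finset.sum_congr rfl (fun p hp => hpair p q ?_), Finset.sum_const, smul_eq_mul,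
        mul_comm]
      intro hpq
      subst hpq
      exact hq (Finset.mem_filter.mp hp).2
    rw [swap_count F 𝓑 (fun p b => p ∈ b ∧ q ∈ b)] at h1
    have h2 : ∀ b ∈ 𝓑, (F.filter (fun p => p ∈ b ∧ q ∈ b)).card
        = if q ∈ b then (b.filter (fun p => σ p = p)).card else 0 := by
      intro b _
      by_cases hqb : q ∈ b
      · rw [if_pos hqb]
        congr 1
        ext p
        simp only [hF, Finset.mem_filter, Finset.mem_univ, true_and]
        tauto
      · rw [if_neg hqb]
        rw [Finset.card_eq_zero, Finset.filter_eq_empty_iff]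
        tauto
    rw [Finset.sum_congr rfl h2, ← Finset.sum_filter] at h1
    exact h1
  -- main inequality: for f ≥ 7 each non-fixed point lies on a fixed block with many fixed pts
  have hmain : ∀ q : P, ¬ σ q = q → 7 ≤ f →
      ∃ b ∈ 𝓑, q ∈ b ∧ b.image ⇑σ = b ∧
        2 * f ≤ (b.filter (fun p => σ p = p)).card + 12 := by
    intro q hq hf7
    have hsum := hkey q hq
    have hBqcard : (𝓑.filter (fun b => q ∈ b)).card = 13 := r13 hv 𝓑 hk hpair q
    set Bq := 𝓑.filter (fun b => q ∈ b) with hBq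
    have hsplitB : ∑ b ∈ Bq.filter (fun b => b.image ⇑σ = b), (b.filter (fun p => σ p = p)).card
        + ∑ b ∈ Bq.filter (fun b => ¬ b.image ⇑σ = b), (b.filter (fun p => σ p = p)).card
        = 2 * f := by
      rw [Finset.sum_filter_add_sum_filter_not]
      exact hsum
    have hBqn_le : ∑ b ∈ Bq.filter (fun b => ¬ b.image ⇑σ = b),
        (b.filter (fun p => σ p = p)).card
        ≤ (Bq.filter (fun b => ¬ b.image ⇑σ = b)).card := by
      have := Finset.sum_le_card_nsmul (Bq.filter (fun b => ¬ b.image ⇑σ = b))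
        (fun b => (b.filter (fun p => σ p = p)).card) 1 ?_
      · simpa using this
      · intro b hb
        obtain ⟨hbBq, hbnf⟩ := Finset.mem_filter.mp hb
        exact hnfblock b (Finset.mem_filter.mp hbBq).1 hbnf
    have hsplitcard : (Bq.filter (fun b => b.image ⇑σ = b)).card
        + (Bq.filter (fun b => ¬ b.image ⇑σ = b)).card = 13 := by
      have h := Finset.card_filter_add_card_filter_not
        (s := Bq) (p := fun b => b.image ⇑σ = b)
      simpa [hBqcard] using h
    rcases (Bq.filter (fun b => b.image ⇑σ = b)).eq_empty_or_nonempty with hemp | ⟨b0, hb0⟩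
    · rw [hemp] at hsplitB
      simp at hsplitB
      omega
    · obtain ⟨hb0Bq, hb0fix⟩ := Finset.mem_filter.mp hb0
      obtain ⟨hb0𝓑, hqb0⟩ := Finset.mem_filter.mp hb0Bq
      refine ⟨b0, hb0𝓑, hqb0, hb0fix, ?_⟩
      have hsingle : Bq.filter (fun b => b.image ⇑σ = b) = {b0} := by
        apply Finset.eq_singleton_iff_unique_mem.mpr
        refine ⟨hb0, ?_⟩
        intro c hc
        obtain ⟨hcBq, hcfix⟩ := Finset.mem_filter.mp hc
        obtain ⟨hc𝓑, hqc⟩ := Finset.mem_filter.mp hcBq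
        exact hnfpoint q hq c hc𝓑 b0 hb0𝓑 hcfix hb0fix hqc hqb0
      have h1 : (Bq.filter (fun b => b.image ⇑σ = b)).card = 1 := by
        rw [hsingle, Finset.card_singleton]
      rw [hsingle, Finset.sum_singleton] at hsplitB
      omega
  -- existence of a non-fixed point
  have hnf_ex : ∃ q : P, ¬ σ q = q := by
    by_contra h
    push_neg at h
    exact hσ1 (Equiv.ext (fun x => by simp [h x]))
  have hfilter_sub_F : ∀ b : Finset P, b.filter (fun p => σ p = p) ⊆ F := by
    intro b x hx
    exact Finset.mem_filter.mpr ⟨Finset.mem_univ x, (Finset.mem_filter.mp hx).2⟩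
  have hm_le_13 : ∀ b ∈ 𝓑, (b.filter (fun p => σ p = p)).card ≤ 13 := by
    intro b hb
    calc (b.filter (fun p => σ p = p)).card ≤ b.card := Finset.card_filter_le _ _
    _ = 13 := hk b hb
  show f = 1
  by_contra hne1
  have hcases : f = 4 ∨ f = 7 ∨ f = 10 ∨ 13 ≤ f := by omega
  obtain ⟨q, hq⟩ := hnf_ex
  rcases hcases with h4 | h7 | h10 | h13
  · -- f = 4
    obtain ⟨p1, hp1, p2, hp2, hp12⟩ := Finset.one_lt_card.mp (by omega : 1 < F.card)
    have hfx1 : σ p1 = p1 := (Finset.mem_filter.mp hp1).2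
    have hfx2 : σ p2 = p2 := (Finset.mem_filter.mp hp2).2
    obtain ⟨b1, b2, hb12, hTeq⟩ := Finset.card_eq_two.mp (hpair p1 p2 hp12)
    have hb1T : b1 ∈ 𝓑.filter (fun c => p1 ∈ c ∧ p2 ∈ c) := by rw [hTeq]; simp
    have hb2T : b2 ∈ 𝓑.filter (fun c => p1 ∈ c ∧ p2 ∈ c) := by rw [hTeq]; simp
    obtain ⟨hb1𝓑, hp1b1, hp2b1⟩ := Finset.mem_filter.mp hb1T
    obtain ⟨hb2𝓑, hp1b2, hp2b2⟩ := Finset.mem_filter.mp hb2T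
    have hFsub : ∀ b ∈ 𝓑, p1 ∈ b → p2 ∈ b → F ⊆ b := by
      intro b hb hp1b hp2b
      have hbfix : b.image ⇑σ = b := hpairfix p1 p2 hfx1 hfx2 hp12 b hb hp1b hp2b
      have hmge : 2 ≤ (b.filter (fun p => σ p = p)).card := by
        apply Finset.one_lt_card.mpr
        exact ⟨p1, Finset.mem_filter.mpr ⟨hp1b, hfx1⟩, p2, Finset.mem_filter.mpr ⟨hp2b, hfx2⟩, hp12⟩
      have hmle : (b.filter (fun p => σ p = p)).card ≤ 4 := by
        have := Finset.card_le_card (hfilter_sub_F b)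
        omega
      have hmmod := hmodb b hb hbfix
      have hm4 : (b.filter (fun p => σ p = p)).card = 4 := by omega
      have heq : b.filter (fun p => σ p = p) = F :=
        Finset.eq_of_subset_of_card_le (hfilter_sub_F b) (by omega)
      rw [← heq]
      exact Finset.filter_subset _ _
    have hsub : F ⊆ b1 ∩ b2 := Finset.subset_inter
      (hFsub b1 hb1𝓑 hp1b1 hp2b1) (hFsub b2 hb2𝓑 hp1b2 hp2b2)
    have hi2 := meet2 hv 𝓑 hcard hk hpair b1 hb1𝓑 b2 hb2𝓑 hb12
    have := Finset.card_le_card hsub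
    omega
  · -- f = 7
    set Bf2 := 𝓑.filter (fun b => b.image ⇑σ = b ∧ 2 ≤ (b.filter (fun p => σ p = p)).card)
      with hBf2
    have hge4 : ∀ b ∈ Bf2, 4 ≤ (b.filter (fun p => σ p = p)).card := by
      intro b hb
      obtain ⟨hb𝓑, hbfix, hb2⟩ := Finset.mem_filter.mp hb
      have := hmodb b hb𝓑 hbfix
      omega
    -- covering of non-fixed points
    have hcover : Finset.univ.filter (fun p => ¬ σ p = p)
        ⊆ Bf2.biUnion (fun b => b.filter (fun p => ¬ σ p = p)) := by
      intro x hx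
      have hxnf : ¬ σ x = x := by simpa using (Finset.mem_filter.mp hx).2
      obtain ⟨b, hb, hxb, hbfix, hineq⟩ := hmain x hxnf (by omega)
      refine Finset.mem_biUnion.mpr ⟨b, ?_, Finset.mem_filter.mpr ⟨hxb, hxnf⟩⟩
      exact Finset.mem_filter.mpr ⟨hb, hbfix, by omega⟩
    have hdisj : ∀ b ∈ Bf2, ∀ c ∈ Bf2, b ≠ c →
        Disjoint (b.filter (fun p => ¬ σ p = p)) (c.filter (fun p => ¬ σ p = p)) := by
      intro b hb c hc hbc
      obtain ⟨hb𝓑, hbfix, _⟩ := Finset.mem_filter.mp hb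
      obtain ⟨hc𝓑, hcfix, _⟩ := Finset.mem_filter.mp hc
      rw [Finset.disjoint_left]
      intro x hxb hxc
      have h1 := (Finset.mem_filter.mp hxb)
      have h2 := (Finset.mem_filter.mp hxc)
      exact h1.2 (hinterfix b hb𝓑 c hc𝓑 hbc hbfix hcfix x
        (Finset.mem_inter.mpr ⟨h1.1, h2.1⟩))
    have hcardnf : (Finset.univ.filter (fun p => ¬ σ p = p)).card = 72 := by omega
    have hbU : 72 ≤ ∑ b ∈ Bf2, (b.filter (fun p => ¬ σ p = p)).card := by
      rw [← Finset.card_biUnion hdisj, ← hcardnf]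
      exact Finset.card_le_card hcover
    have hterm9 : ∀ b ∈ Bf2, (b.filter (fun p => ¬ σ p = p)).card ≤ 9 := by
      intro b hb
      have hb𝓑 := (Finset.mem_filter.mp hb).1
      have h4 := hge4 b hb
      have hsplit : (b.filter (fun p => σ p = p)).card
          + (b.filter (fun p => ¬ σ p = p)).card = 13 := by
        have h := Finset.card_filter_add_card_filter_not
          (s := b) (p := fun p => σ p = p)
        simpa [hk b hb𝓑] using h
      omega
    have hub : ∑ b ∈ Bf2, (b.filter (fun p => ¬ σ p = p)).card ≤ Bf2.card * 9 := by
      have := Finset.sum_le_card_nsmul Bf2 (fun b => (b.filter (fun p => ¬ σ p = p)).card)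
        9 hterm9
      simpa [mul_comm] using this
    have hBf2ge : 8 ≤ Bf2.card := by
      by_contra hlt
      push_neg at hlt
      have : Bf2.card * 9 ≤ 63 := by omega
      omega
    -- pair counting upper bound
    have hod : ∀ b : Finset P, (b.filter (fun p => σ p = p)).offDiag
        = F.offDiag.filter (fun z => z.1 ∈ b ∧ z.2 ∈ b) := by
      intro b
      ext ⟨x, y⟩
      simp only [Finset.mem_offDiag, Finset.mem_filter, Finset.mem_univ, true_and, hF]
      tauto
    have hps : ∑ b ∈ Bf2, ((b.filter (fun p => σ p = p)).offDiag).card ≤ 84 := by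
      have e1 : ∑ b ∈ Bf2, ((b.filter (fun p => σ p = p)).offDiag).card
          = ∑ z ∈ F.offDiag, (Bf2.filter (fun b => z.1 ∈ b ∧ z.2 ∈ b)).card :=
        (Finset.sum_congr rfl (fun b _ => congrArg Finset.card (hod b))).trans
          (swap_count Bf2 F.offDiag (fun b z => z.1 ∈ b ∧ z.2 ∈ b))
      rw [e1]
      have e2 : ∀ z ∈ F.offDiag, (Bf2.filter (fun b => z.1 ∈ b ∧ z.2 ∈ b)).card ≤ 2 := by
        rintro ⟨x, y⟩ hz
        have hxy : x ≠ y := (Finset.mem_offDiag.mp hz).2.2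
        rw [← hpair x y hxy]
        apply Finset.card_le_card
        apply Finset.filter_subset_filter
        exact Finset.filter_subset _ _
      calc ∑ z ∈ F.offDiag, (Bf2.filter (fun b => z.1 ∈ b ∧ z.2 ∈ b)).card
          ≤ F.offDiag.card * 2 := by
            have := Finset.sum_le_card_nsmul F.offDiag
              (fun z => (Bf2.filter (fun b => z.1 ∈ b ∧ z.2 ∈ b)).card) 2 e2
            simpa [mul_comm] using this
        _ = 84 := by rw [Finset.offDiag_card, ← hf, h7]
    have hterm12 : ∀ b ∈ Bf2, 12 ≤ ((b.filter (fun p => σ p = p)).offDiag).card := by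
      intro b hb
      rw [Finset.offDiag_card]
      have h4 := hge4 b hb
      have h5 : 4 * (b.filter (fun p => σ p = p)).card
          ≤ (b.filter (fun p => σ p = p)).card * (b.filter (fun p => σ p = p)).card :=
        Nat.mul_le_mul_right _ h4
      omega
    have hlb : Bf2.card * 12 ≤ ∑ b ∈ Bf2, ((b.filter (fun p => σ p = p)).offDiag).card := by
      have := Finset.card_nsmul_le_sum Bf2
        (fun b => ((b.filter (fun p => σ p = p)).offDiag).card) 12 hterm12
      simpa [mul_comm] using this
    omega
  · -- f = 10
    have hblock10 : ∀ q' : P, ¬ σ q' = q' → ∃ b ∈ 𝓑, q' ∈ b ∧ b.image ⇑σ = b ∧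
        b.filter (fun p => σ p = p) = F := by
      intro q' hq'
      obtain ⟨b, hb, hq'b, hbfix, hineq⟩ := hmain q' hq' (by omega)
      have hmmod := hmodb b hb hbfix
      have hmle : (b.filter (fun p => σ p = p)).card ≤ 10 := by
        have := Finset.card_le_card (hfilter_sub_F b)
        omega
      refine ⟨b, hb, hq'b, hbfix, ?_⟩
      exact Finset.eq_of_subset_of_card_le (hfilter_sub_F b) (by omega)
    obtain ⟨b, hb, hqb, hbfix, hbF⟩ := hblock10 q hq
    have hallin : Finset.univ.filter (fun p => ¬ σ p = p) ⊆ b := by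
      intro x hx
      have hxnf : ¬ σ x = x := by simpa using (Finset.mem_filter.mp hx).2
      obtain ⟨b', hb', hxb', hb'fix, hb'F⟩ := hblock10 x hxnf
      by_cases hbb : b' = b
      · subst hbb; exact hxb'
      · exfalso
        have hsub : F ⊆ b ∩ b' := by
          apply Finset.subset_inter
          · rw [← hbF]; exact Finset.filter_subset _ _
          · rw [← hb'F]; exact Finset.filter_subset _ _
        have hi2 := meet2 hv 𝓑 hcard hk hpair b hb b' hb' (Ne.symm hbb)
        have := Finset.card_le_card hsub
        omega
    have h69 : (Finset.univ.filter (fun p => ¬ σ p = p)).card = 69 := by omega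
    have := Finset.card_le_card hallin
    rw [h69, hk b hb] at this
    omega
  · -- 13 ≤ f
    obtain ⟨b, hb, hqb, hbfix, hineq⟩ := hmain q hq (by omega)
    have := hm_le_13 b hb
    omega

end Core


/-- If G is a nontrivial 3-group of automorphisms of a biplane with
parameters (79,13,2), then |G| = 3. -/

theorem stmt_12 {P : Type*} [Fintype P] [DecidableEq P]
    (hv : Fintype.card P = 79)
    (𝓑 : Finset (Finset P)) (hcard : 𝓑.card = 79)
    (hk : ∀ b ∈ 𝓑, b.card = 13)
    (hpair : ∀ p q : P, p ≠ q →
      (𝓑.filter (fun b => p ∈ b ∧ q ∈ b)).card = 2)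
    (G : Subgroup (Equiv.Perm P))
    (hG : ∀ σ ∈ G, ∀ b ∈ 𝓑, b.image σ ∈ 𝓑)
    (h3 : IsPGroup 3 G) (hnt : G ≠ ⊥) :
    Nat.card G = 3 := by
  classical
  haveI : Fact (Nat.Prime 3) := ⟨by norm_num⟩
  haveI : Fintype ↥G := Fintype.ofFinite _
  obtain ⟨n, hn⟩ := IsPGroup.iff_card.mp h3
  have huniq : ∀ τ : Equiv.Perm P, τ ∈ G → τ ^ 3 = 1 → τ ≠ 1 →
      (Finset.univ.filter (fun p => τ p = p)).card = 1 :=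
    fun τ hτ h1 h2 => fix_unique hv 𝓑 hcard hk hpair τ h1 h2 (hG τ hτ)
  have hpow3 : ∀ σ : Equiv.Perm P, σ ∈ G → σ ≠ 1 →
      ∃ τ : Equiv.Perm P, τ ∈ G ∧ τ ≠ 1 ∧ τ ^ 3 = 1 ∧ ∃ m : ℕ, τ = σ ^ m := by
    intro σ hσ hσ1
    obtain ⟨k, hk'⟩ := h3 ⟨σ, hσ⟩
    have hk2 : σ ^ (3 : ℕ) ^ k = 1 := by
      have h := congrArg (Subtype.val) hk'
      simpa using h
    obtain ⟨m, hm1, hm2⟩ := cube_power σ hσ1 hk2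
    exact ⟨σ ^ m, G.pow_mem hσ m, hm1, hm2, m, rfl⟩
  haveI : Nontrivial ↥G := G.bot_or_nontrivial.resolve_left hnt
  haveI := IsPGroup.center_nontrivial h3
  obtain ⟨z, hz⟩ := exists_ne (1 : ↥(Subgroup.center ↥G))
  set ζ : ↥G := (z : ↥G) with hζ
  have hζ1 : (ζ : Equiv.Perm P) ≠ 1 := by
    intro h
    exact hz (Subtype.ext (Subtype.ext h))
  obtain ⟨τ, hτG, hτ1, hτ3, m, hτm⟩ := hpow3 (ζ : Equiv.Perm P) ζ.2 hζ1
  have hτcomm : ∀ g : Equiv.Perm P, g ∈ G → g * τ = τ * g := by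
    intro g hg
    have hcg : (⟨g, hg⟩ : ↥G) * ζ = ζ * ⟨g, hg⟩ := Subgroup.mem_center_iff.mp z.2 _
    have hcg' : g * (ζ : Equiv.Perm P) = (ζ : Equiv.Perm P) * g := congrArg Subtype.val hcg
    rw [hτm]
    exact Commute.pow_right hcg' m
  have hcard1 := huniq τ hτG hτ3 hτ1
  obtain ⟨α, hα⟩ := Finset.card_eq_one.mp hcard1
  have hτα : τ α = α := by
    have hm : α ∈ Finset.univ.filter (fun p => τ p = p) := by
      rw [hα]; exact Finset.mem_singleton_self α
    exact (Finset.mem_filter.mp hm).2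
  have hgα : ∀ g : Equiv.Perm P, g ∈ G → g α = α := by
    intro g hg
    have h1 : τ (g α) = g α := by
      have hc := congrArg (fun e : Equiv.Perm P => e α) (hτcomm g hg)
      simp only [Equiv.Perm.mul_apply] at hc
      rw [hτα] at hc
      exact hc.symm
    have h2 : g α ∈ Finset.univ.filter (fun p => τ p = p) :=
      Finset.mem_filter.mpr ⟨Finset.mem_univ _, h1⟩
    rw [hα] at h2
    exact Finset.mem_singleton.mp h2
  have hclosed : ∀ σ ∈ G, ∀ x ∈ Finset.univ.erase α, σ x ∈ Finset.univ.erase α := by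
    intro σ hσ x hx
    refine Finset.mem_erase.mpr ⟨?_, Finset.mem_univ _⟩
    intro h
    exact (Finset.mem_erase.mp hx).1 (σ.injective (h.trans (hgα σ hσ).symm))
  have hfree : ∀ σ ∈ G, ∀ x ∈ Finset.univ.erase α, σ x = x → σ = 1 := by
    intro σ hσ x hx hfix
    by_contra hσ1
    obtain ⟨τ', hτ'G, hτ'1, hτ'3, m', hτ'm⟩ := hpow3 σ hσ hσ1
    have hτ'x : τ' x = x := by rw [hτ'm]; exact fixed_pow σ x hfix m'
    have hτ'α : τ' α = α := hgα τ' hτ'G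
    have hc := huniq τ' hτ'G hτ'3 hτ'1
    obtain ⟨β, hβ⟩ := Finset.card_eq_one.mp hc
    have hx1 : x = β := by
      have : x ∈ Finset.univ.filter (fun p => τ' p = p) :=
        Finset.mem_filter.mpr ⟨Finset.mem_univ _, hτ'x⟩
      rw [hβ] at this; exact Finset.mem_singleton.mp this
    have hα1 : α = β := by
      have : α ∈ Finset.univ.filter (fun p => τ' p = p) :=
        Finset.mem_filter.mpr ⟨Finset.mem_univ _, hτ'α⟩
      rw [hβ] at this; exact Finset.mem_singleton.mp this
    exact (Finset.mem_erase.mp hx).1 (hx1.trans hα1.symm)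
  have hdvd := free_partition G (Finset.univ.erase α) hclosed hfree
  have h78 : (Finset.univ.erase α).card = 78 := by
    rw [Finset.card_erase_of_mem (Finset.mem_univ α), Finset.card_univ, hv]
  rw [h78] at hdvd
  rw [Nat.card_eq_fintype_card] at hn
  have hn1 : n ≠ 0 := by
    intro h
    rw [h, pow_zero] at hn
    have := Fintype.one_lt_card (α := ↥G)
    omega
  have hn2 : n < 2 := by
    by_contra h
    push_neg at h
    have h9 : (9 : ℕ) ∣ Fintype.card ↥G := by
      rw [hn]
      calc (9 : ℕ) = 3 ^ 2 := by norm_num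
      _ ∣ 3 ^ n := pow_dvd_pow 3 h
    have : (9 : ℕ) ∣ 78 := h9.trans hdvd
    norm_num at this
  have : n = 1 := by omega
  rw [Nat.card_eq_fintype_card, hn, this, pow_one]
end

section
/- The Diophantine equation 8x² - y² = 7 has infinitely many positive integer solutions; in particular, all solutions are given by (x,y) = (uₙ + vₙ, uₙ + 8vₙ) and (uₙ - vₙ, -uₙ + 8vₙ) where uₙ + vₙ√8 = (3 + √8)ⁿ, i.e., uₙ, vₙ satisfy u₀=1, v₀=0, uₙ₊₁ = 3uₙ + 8vₙ, vₙ₊₁ = uₙ + 3vₙ. -/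
/-- The Diophantine equation 8x² - y² = 7 has infinitely many positive
integer solutions; moreover, with uₙ, vₙ defined by u₀ = 1, v₀ = 0,
uₙ₊₁ = 3uₙ + 8vₙ, vₙ₊₁ = uₙ + 3vₙ, the pairs (uₙ + vₙ, uₙ + 8vₙ) and
(uₙ - vₙ, -uₙ + 8vₙ) are solutions, and every positive solution is of
one of these forms. -/
theorem stmt_15 (u v : ℕ → ℤ) (hu0 : u 0 = 1) (hv0 : v 0 = 0)
    (hu : ∀ n, u (n + 1) = 3 * u n + 8 * v n)
    (hv : ∀ n, v (n + 1) = u n + 3 * v n) :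
    Set.Infinite {p : ℤ × ℤ | 0 < p.1 ∧ 0 < p.2 ∧ 8 * p.1 ^ 2 - p.2 ^ 2 = 7} ∧
    (∀ n : ℕ,
      8 * (u n + v n) ^ 2 - (u n + 8 * v n) ^ 2 = 7 ∧
      8 * (u n - v n) ^ 2 - (-(u n) + 8 * v n) ^ 2 = 7) ∧
    (∀ x y : ℤ, 0 < x → 0 < y → 8 * x ^ 2 - y ^ 2 = 7 →
      ∃ n : ℕ, (x = u n + v n ∧ y = u n + 8 * v n) ∨
               (x = u n - v n ∧ y = -(u n) + 8 * v n)) := by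
  have pell : ∀ n : ℕ, (u n) ^ 2 - 8 * (v n) ^ 2 = 1 := by
    intro n
    induction n with
    | zero => rw [hu0, hv0]; ring
    | succ n ih => rw [hu, hv]; linear_combination ih
  have pos : ∀ n : ℕ, 1 ≤ u n ∧ (n : ℤ) ≤ v n := by
    intro n
    induction n with
    | zero => simp [hu0, hv0]
    | succ n ih =>
      obtain ⟨h1, h2⟩ := ih
      have hn : (0 : ℤ) ≤ (n : ℤ) := Nat.cast_nonneg n
      refine ⟨?_, ?_⟩
      · rw [hu]; linarith
      · rw [hv]; push_cast; linarith
  refine ⟨?_, ?_, ?_⟩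
  · apply Set.infinite_of_injective_forall_mem
      (f := fun n : ℕ => ((u n + v n, u n + 8 * v n) : ℤ × ℤ))
    · have mono : StrictMono (fun n : ℕ => u n + v n) := by
        apply strictMono_nat_of_lt_succ
        intro n
        have h := pos n
        have hn : (0 : ℤ) ≤ (n : ℤ) := Nat.cast_nonneg n
        simp only [hu, hv]
        linarith [h.1, h.2]
      intro a b hab
      exact mono.injective (congrArg Prod.fst hab)
    · intro n
      have h := pos n
      have hn : (0 : ℤ) ≤ (n : ℤ) := Nat.cast_nonneg n
      refine ⟨by dsimp; linarith [h.1, h.2], by dsimp; linarith [h.1, h.2], ?_⟩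
      dsimp
      linear_combination 7 * pell n
  · intro n
    exact ⟨by linear_combination 7 * pell n, by linear_combination 7 * pell n⟩
  · have key : ∀ k : ℕ, ∀ x y : ℤ, x.natAbs ≤ k → 0 < x → 0 < y →
        8 * x ^ 2 - y ^ 2 = 7 →
        ∃ n : ℕ, (x = u n + v n ∧ y = u n + 8 * v n) ∨
          (x = u n - v n ∧ y = -(u n) + 8 * v n) := by
      intro k
      induction k with
      | zero => intro x y hk hx _ _; omega
      | succ k ih =>
        intro x y hk hx hy heq
        by_cases h1 : x = 1
        · subst h1
          have hy2 : (y - 1) * (y + 1) = 0 := by linear_combination -heq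
          have hy1 : y = 1 := by
            rcases mul_eq_zero.mp hy2 with h | h <;> omega
          exact ⟨0, Or.inl ⟨by rw [hu0, hv0]; omega, by rw [hu0, hv0]; omega⟩⟩
        by_cases h2 : x = 2
        · subst h2
          have hy2 : (y - 5) * (y + 5) = 0 := by linear_combination -heq
          have hy5 : y = 5 := by
            rcases mul_eq_zero.mp hy2 with h | h <;> omega
          refine ⟨1, Or.inr ⟨?_, ?_⟩⟩ <;>
            · rw [show (1 : ℕ) = 0 + 1 from rfl, hu, hv, hu0, hv0]; omega
        · have hx3 : 3 ≤ x := by omega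
          have hlt : y < 3 * x := by nlinarith
          have hgt : 2 * x < y := by nlinarith
          have hgt2 : 8 * x < 3 * y := by nlinarith
          obtain ⟨n, hn⟩ := ih (3 * x - y) (3 * y - 8 * x) (by omega) (by omega)
            (by omega) (by linear_combination heq)
          rcases hn with ⟨e1, e2⟩ | ⟨e1, e2⟩
          · exact ⟨n + 1, Or.inl ⟨by rw [hu, hv]; linarith, by rw [hu, hv]; linarith⟩⟩
          · exact ⟨n + 1, Or.inr ⟨by rw [hu, hv]; linarith, by rw [hu, hv]; linarith⟩⟩
    intro x y hx hy heq
    exact key x.natAbs x y le_rfl hx hy heq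
end

section
/- There is no even prime power q = 2^a ≥ 4 and integer k such that k(k-1) = 2(c² - 1), where c = q²(q²-1)/2. Equivalently, for q = 2^a ≥ 4 and c = q²(q²-1)/2, the number 8c² - 7 is never a perfect square. -/
lemma core_17 (c : ℕ) (h3 : 3 ∣ c) (hc2 : 2 ≤ c) :
    ∀ e : ℕ, e ^ 2 ≠ 8 * c ^ 2 - 7 := by
  intro e he
  have h7 : 7 ≤ 8 * c ^ 2 := by nlinarith
  have heq : e ^ 2 + 7 = 8 * c ^ 2 := by omega
  obtain ⟨m, rfl⟩ := h3
  have h := congrArg (fun n : ℕ => (n : ZMod 3)) heq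
  push_cast at h
  have h3z : (3 : ZMod 3) = 0 := by decide
  rw [h3z] at h
  ring_nf at h
  have hall : ∀ x : ZMod 3, ¬ (7 + x ^ 2 = 0) := by decide
  exact hall _ h

/-- For q = 2^a with a ≥ 2 and c = q²(q²-1)/2, there is no integer k with
k(k-1) = 2(c²-1); equivalently, 8c² - 7 is not a perfect square. -/
theorem stmt_17 (a c : ℕ) (ha : 2 ≤ a)
    (hc : 2 * c = (2 ^ a) ^ 2 * ((2 ^ a) ^ 2 - 1)) :
    (¬ ∃ k : ℕ, k * (k - 1) = 2 * (c ^ 2 - 1)) ∧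
    (¬ ∃ e : ℕ, e ^ 2 = 8 * c ^ 2 - 7) := by
  have hq : 4 ≤ 2 ^ a := by
    calc (4:ℕ) = 2 ^ 2 := rfl
    _ ≤ 2 ^ a := Nat.pow_le_pow_right (by norm_num) ha
  have h16 : 16 ≤ (2 ^ a) ^ 2 := by nlinarith
  have h15 : 15 ≤ (2 ^ a) ^ 2 - 1 := by omega
  have h240 : 240 ≤ (2 ^ a) ^ 2 * ((2 ^ a) ^ 2 - 1) :=
    Nat.mul_le_mul h16 h15
  have hc2 : 2 ≤ c := by omega
  have h3 : 3 ∣ c := by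
    have h1 : (3:ℕ) ∣ (2 ^ a) ^ 2 - 1 := by
      have h4 : (2 ^ a) ^ 2 = 4 ^ a := by
        rw [← pow_mul, Nat.mul_comm, pow_mul]; norm_num
      rw [h4]
      have := Nat.sub_dvd_pow_sub_pow 4 1 a
      simpa using this
    have h2 : (3:ℕ) ∣ 2 * c := hc ▸ Dvd.dvd.mul_left h1 _
    omega
  constructor
  · rintro ⟨k, hk⟩
    have hcc : 4 ≤ c ^ 2 := by nlinarith
    have hk2 : 2 ≤ k := by
      by_contra h
      push_neg at h
      set s := c ^ 2 with hs
      interval_cases k <;> omega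
    obtain ⟨m, rfl⟩ : ∃ m, k = m + 1 := ⟨k - 1, by omega⟩
    have hm : (m + 1) * m = 2 * (c ^ 2 - 1) := by simpa using hk
    refine core_17 c h3 hc2 (2 * m + 1) ?_
    have h4 : (2 * m + 1) ^ 2 = 4 * ((m + 1) * m) + 1 := by ring
    rw [h4, hm]
    omega
  · rintro ⟨e, he⟩
    exact core_17 c h3 hc2 e he
end
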